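/- arXiv:1703.09536 — 7 statements merged into one kernel-verified Lean document; each statement's English description precedes it below -/
import Mathlib

section
/- Let A and B be elements of a unital Banach algebra over the reals (e.g. bounded linear operators on a Banach space). Then for every T > 0 there exists a constant c > 0 such that for all natural numbers n ≥ 1 and all τ ∈ [0, T], the Lie–Trotter approximation satisfies ‖(exp(−(τ/n)·A) · exp(−(τ/n)·B))^n − exp(−τ·(A + B))‖ ≤ c/n. In particular sup_{τ∈[0,T]} ‖(exp(−τA/n)·exp(−τB/n))^n − exp(−τ(A+B))‖ = O(1/n) as n → ∞. -/
open NormedSpace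

set_option maxHeartbeats 1000000
set_option linter.unusedSectionVars false
set_option linter.unreachableTactic false
set_option linter.unusedTactic false

section AuxTrotter
variable {𝔸 : Type*} [NormedRing 𝔸] [NormedAlgebra ℝ 𝔸] [CompleteSpace 𝔸]

lemma hasSum_exp_real' (t : ℝ) : HasSum (fun n : ℕ => t ^ n / (n.factorial : ℝ)) (Real.exp t) := by
  rw [Real.exp_eq_exp_ℝ]
  rw [exp_eq_tsum_div]
  exact (expSeries_div_summable t).hasSum

lemma fact_inv_le (n k : ℕ) : (((n+k).factorial : ℝ))⁻¹ ≤ ((n.factorial : ℝ))⁻¹ := by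
  have h2 : (n.factorial : ℝ) ≤ ((n+k).factorial : ℝ) := by
    exact_mod_cast Nat.factorial_le (Nat.le_add_right n k)
  have h3 : (0:ℝ) < n.factorial := by exact_mod_cast n.factorial_pos
  exact inv_anti₀ h3 h2

lemma tail1' (x : 𝔸) : ‖exp x - 1‖ ≤ ‖x‖ * Real.exp ‖x‖ := by
  have hsum1 : Summable fun n : ℕ => (((n+1).factorial : ℝ))⁻¹ • x ^ (n+1) :=
    (summable_nat_add_iff 1).mpr (expSeries_summable' x)
  have key : exp x - 1 = ∑' n : ℕ, (((n+1).factorial : ℝ))⁻¹ • x ^ (n+1) := by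
    have h := Summable.sum_add_tsum_nat_add' (f := fun n : ℕ => ((n.factorial : ℝ))⁻¹ • x ^ n) (k := 1) hsum1
    simp only [Finset.sum_range_one] at h
    rw [exp_eq_tsum (𝕂 := ℝ)]
    simp only at h ⊢
    rw [← h]
    simp
  rw [key]
  refine tsum_of_norm_bounded ((hasSum_exp_real' ‖x‖).mul_left ‖x‖) fun n => ?_
  rw [norm_smul, norm_inv, Real.norm_natCast]
  have h1 : ‖x ^ (n+1)‖ ≤ ‖x‖ ^ (n+1) := norm_pow_le' x n.succ_pos
  calc (((n+1).factorial : ℝ))⁻¹ * ‖x ^ (n+1)‖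
      ≤ ((n.factorial : ℝ))⁻¹ * ‖x‖ ^ (n+1) := by
        apply mul_le_mul (fact_inv_le n 1) h1 (norm_nonneg _) (by positivity)
    _ = ‖x‖ * (‖x‖ ^ n / (n.factorial : ℝ)) := by rw [pow_succ]; ring

lemma tail2' (x : 𝔸) : ‖exp x - 1 - x‖ ≤ ‖x‖^2 * Real.exp ‖x‖ := by
  have hsum1 : Summable fun n : ℕ => (((n+2).factorial : ℝ))⁻¹ • x ^ (n+2) :=
    (summable_nat_add_iff 2).mpr (expSeries_summable' x)
  have key : exp x - 1 - x = ∑' n : ℕ, (((n+2).factorial : ℝ))⁻¹ • x ^ (n+2) := by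
    have h := Summable.sum_add_tsum_nat_add' (f := fun n : ℕ => ((n.factorial : ℝ))⁻¹ • x ^ n) (k := 2) hsum1
    simp only [Finset.sum_range_succ, Finset.sum_range_one] at h
    rw [exp_eq_tsum (𝕂 := ℝ)]
    simp only at h ⊢
    rw [← h]
    simp [Nat.factorial]
    abel
  rw [key]
  refine tsum_of_norm_bounded ((hasSum_exp_real' ‖x‖).mul_left (‖x‖^2)) fun n => ?_
  rw [norm_smul, norm_inv, Real.norm_natCast]
  have h1 : ‖x ^ (n+2)‖ ≤ ‖x‖ ^ (n+2) := norm_pow_le' x (n+1).succ_pos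
  calc (((n+2).factorial : ℝ))⁻¹ * ‖x ^ (n+2)‖
      ≤ ((n.factorial : ℝ))⁻¹ * ‖x‖ ^ (n+2) := by
        apply mul_le_mul (fact_inv_le n 2) h1 (norm_nonneg _) (by positivity)
    _ = ‖x‖^2 * (‖x‖ ^ n / (n.factorial : ℝ)) := by ring


lemma norm_one_add_pow_sub_one' (u : 𝔸) (k : ℕ) : ‖(1+u)^k - 1‖ ≤ (1+‖u‖)^k - 1 := by
  induction k with
  | zero => simp
  | succ k ih =>
    have e1 : (1+u)^(k+1) - 1 = ((1+u)^k - 1) + (((1+u)^k - 1) * u + u) := by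
      rw [pow_succ]; noncomm_ring
    rw [e1]
    have h2 : ‖((1+u)^k - 1) * u + u‖ ≤ (1+‖u‖)^k * ‖u‖ := by
      calc ‖((1+u)^k - 1) * u + u‖ ≤ ‖((1+u)^k - 1) * u‖ + ‖u‖ := norm_add_le _ _
        _ ≤ ‖(1+u)^k - 1‖ * ‖u‖ + ‖u‖ := by gcongr; exact norm_mul_le _ _
        _ ≤ ((1+‖u‖)^k - 1) * ‖u‖ + ‖u‖ := by gcongr
        _ = (1+‖u‖)^k * ‖u‖ := by ring
    calc ‖((1+u)^k - 1) + (((1+u)^k - 1) * u + u)‖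
        ≤ ‖(1+u)^k - 1‖ + ‖((1+u)^k - 1) * u + u‖ := norm_add_le _ _
      _ ≤ ((1+‖u‖)^k - 1) + (1+‖u‖)^k * ‖u‖ := add_le_add ih h2
      _ = (1+‖u‖)^(k+1) - 1 := by rw [pow_succ]; ring

lemma pow_sub_pow_eq' (S T : 𝔸) : ∀ n : ℕ,
    S^n - T^n = ∑ i ∈ Finset.range n, S^i * (S - T) * T^(n-1-i)
  | 0 => by simp
  | (n+1) => by
    have ih := pow_sub_pow_eq' S T n
    have e1 : S^(n+1) - T^(n+1) = S^n * (S - T) + (S^n - T^n) * T := by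
      rw [pow_succ, pow_succ]; noncomm_ring
    rw [e1, ih, Finset.sum_mul, Finset.sum_range_succ]
    have : ∀ i ∈ Finset.range n, S^i * (S - T) * T^(n-1-i) * T = S^i * (S - T) * T^(n+1-1-i) := by
      intro i hi
      rw [Finset.mem_range] at hi
      have h2 : n - 1 - i + 1 = n + 1 - 1 - i := by omega
      rw [mul_assoc, mul_assoc, ← pow_succ, h2, ← mul_assoc]
    rw [Finset.sum_congr rfl this]
    have hn : n + 1 - 1 - n = 0 := by omega
    rw [hn, pow_zero, mul_one]
    abel

lemma norm_pow_sub_pow_le' (S T : 𝔸) (C : ℝ) (n : ℕ)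
    (hS : ∀ k, k ≤ n → ‖S^k‖ ≤ C) (hT : ∀ k, k ≤ n → ‖T^k‖ ≤ C) :
    ‖S^n - T^n‖ ≤ n * C^2 * ‖S - T‖ := by
  have hC : 0 ≤ C := le_trans (norm_nonneg _) (hS 0 (Nat.zero_le n))
  rw [pow_sub_pow_eq' S T n]
  calc ‖∑ i ∈ Finset.range n, S^i * (S - T) * T^(n-1-i)‖
      ≤ ∑ i ∈ Finset.range n, ‖S^i * (S - T) * T^(n-1-i)‖ := norm_sum_le _ _
    _ ≤ ∑ i ∈ Finset.range n, C^2 * ‖S - T‖ := by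
        apply Finset.sum_le_sum
        intro i hi
        rw [Finset.mem_range] at hi
        calc ‖S^i * (S - T) * T^(n-1-i)‖ ≤ ‖S^i * (S - T)‖ * ‖T^(n-1-i)‖ := norm_mul_le _ _
          _ ≤ ‖S^i‖ * ‖S - T‖ * ‖T^(n-1-i)‖ := by gcongr; exact norm_mul_le _ _
          _ ≤ C * ‖S - T‖ * C := by
              gcongr
              · exact hS i (le_of_lt hi)
              · exact hT _ (by omega)
          _ = C^2 * ‖S - T‖ := by ring
    _ = n * C^2 * ‖S - T‖ := by rw [Finset.sum_const, Finset.card_range]; ring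



lemma exp_prod_err' (x y : 𝔸) :
    ‖exp x * exp y - exp (x+y)‖ ≤
      (3 + 2*(‖x‖+‖y‖) + max ‖(1:𝔸)‖ 1) * Real.exp (2*(‖x‖+‖y‖)) * (‖x‖+‖y‖)^2 := by
  set rx := exp x - 1 - x with hrxd
  set ry := exp y - 1 - y with hryd
  set rz := exp (x+y) - 1 - (x+y) with hrzd
  have hex : exp x = 1 + x + rx := by rw [hrxd]; abel
  have hey : exp y = 1 + y + ry := by rw [hryd]; abel
  have hez : exp (x+y) = 1 + (x+y) + rz := by rw [hrzd]; abel
  have hdec : exp x * exp y - exp (x+y)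
      = x*y + x*ry + ry + rx * exp y - rz := by
    rw [hey, hez, hex]; noncomm_ring
  set p := ‖x‖ with hp
  set q := ‖y‖ with hq
  set s := p + q with hs
  have hp0 : 0 ≤ p := norm_nonneg _
  have hq0 : 0 ≤ q := norm_nonneg _
  have hs0 : 0 ≤ s := by positivity
  have hps : p ≤ s := by simp [hs, hq0]
  have hqs : q ≤ s := by simp [hs, hp0]
  set w := ‖x + y‖ with hw
  have hw0 : 0 ≤ w := norm_nonneg _
  have hws : w ≤ s := norm_add_le _ _
  set N1 := max ‖(1:𝔸)‖ 1 with hN1d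
  have hN1 : (1:ℝ) ≤ N1 := le_max_right _ _
  have hN1' : ‖(1:𝔸)‖ ≤ N1 := le_max_left _ _
  set E := Real.exp s with hE
  have hE1 : (1:ℝ) ≤ E := Real.one_le_exp hs0
  have hEp : Real.exp p ≤ E := Real.exp_le_exp.mpr hps
  have hEq : Real.exp q ≤ E := Real.exp_le_exp.mpr hqs
  have hEw : Real.exp w ≤ E := Real.exp_le_exp.mpr hws
  have hE2 : Real.exp (2*s) = E * E := by rw [hE, ← Real.exp_add]; ring_nf
  have hexpy : ‖exp y‖ ≤ N1 + q * Real.exp q := by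
    calc ‖exp y‖ = ‖(exp y - 1) + 1‖ := by congr 1; abel
      _ ≤ ‖exp y - 1‖ + ‖(1:𝔸)‖ := norm_add_le _ _
      _ ≤ q * Real.exp q + N1 := add_le_add (tail1' y) hN1'
      _ = N1 + q * Real.exp q := by ring
  have hrx : ‖rx‖ ≤ p^2 * Real.exp p := tail2' x
  have hry : ‖ry‖ ≤ q^2 * Real.exp q := tail2' y
  have hrz : ‖rz‖ ≤ w^2 * Real.exp w := tail2' (x+y)
  rw [hdec]
  have step1 : ‖x*y + x*ry + ry + rx * exp y - rz‖ ≤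
      p*q + p*(q^2*Real.exp q) + q^2*Real.exp q
        + (p^2*Real.exp p) * (N1 + q*Real.exp q) + w^2*Real.exp w := by
    have h1 : ‖x*y‖ ≤ p*q := norm_mul_le _ _
    have h2 : ‖x*ry‖ ≤ p*(q^2*Real.exp q) := by
      calc ‖x*ry‖ ≤ p * ‖ry‖ := norm_mul_le _ _
        _ ≤ p*(q^2*Real.exp q) := by gcongr
    have h4 : ‖rx * exp y‖ ≤ (p^2*Real.exp p) * (N1 + q*Real.exp q) := by
      calc ‖rx * exp y‖ ≤ ‖rx‖ * ‖exp y‖ := norm_mul_le _ _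
        _ ≤ (p^2*Real.exp p) * (N1 + q*Real.exp q) := by
            apply mul_le_mul hrx hexpy (norm_nonneg _) (by positivity)
    calc ‖x*y + x*ry + ry + rx * exp y - rz‖
        ≤ ‖x*y + x*ry + ry + rx * exp y‖ + ‖rz‖ := norm_sub_le _ _
      _ ≤ ‖x*y + x*ry + ry‖ + ‖rx * exp y‖ + ‖rz‖ := by gcongr; exact norm_add_le _ _
      _ ≤ ‖x*y + x*ry‖ + ‖ry‖ + ‖rx * exp y‖ + ‖rz‖ := by gcongr ?_ + _ + _; exact norm_add_le _ _
      _ ≤ ‖x*y‖ + ‖x*ry‖ + ‖ry‖ + ‖rx * exp y‖ + ‖rz‖ := by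
          gcongr ?_ + _ + _ + _; exact norm_add_le _ _
      _ ≤ _ := by
          apply add_le_add (add_le_add (add_le_add (add_le_add h1 h2) hry) h4) hrz
  refine le_trans step1 ?_
  have step2 : p*q + p*(q^2*Real.exp q) + q^2*Real.exp q
        + (p^2*Real.exp p) * (N1 + q*Real.exp q) + w^2*Real.exp w
      ≤ s*s + s*(s^2*E) + s^2*E + (s^2*E)*(N1 + s*E) + s^2*E := by
    gcongr
  refine le_trans step2 ?_
  rw [hE2]
  nlinarith [mul_nonneg hs0 hs0, mul_nonneg (mul_nonneg hs0 hs0) hs0, sq_nonneg s, sq_nonneg E,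
    mul_le_mul_of_nonneg_left hE1 (mul_nonneg (mul_nonneg hs0 hs0) (le_trans zero_le_one hE1)),
    mul_le_mul_of_nonneg_left hE1 (mul_nonneg hs0 hs0)]

end AuxTrotter


/-- Lie–Trotter product formula with rate `O(1/n)` for elements of a unital
real Banach algebra: for every `T > 0` there is `c > 0` such that for all
`n ≥ 1` and all `τ ∈ [0,T]`,
`‖(exp(−(τ/n)A) exp(−(τ/n)B))^n − exp(−τ(A+B))‖ ≤ c/n`. -/
theorem trotter_bounded_rate {𝔸 : Type*} [NormedRing 𝔸] [NormedAlgebra ℝ 𝔸]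
    [CompleteSpace 𝔸] (A B : 𝔸) :
    ∀ T : ℝ, 0 < T → ∃ c : ℝ, 0 < c ∧ ∀ n : ℕ, 1 ≤ n → ∀ τ : ℝ,
      τ ∈ Set.Icc 0 T →
      ‖(exp (-(τ / n) • A) * exp (-(τ / n) • B)) ^ n
          - exp (-τ • (A + B))‖ ≤ c / n := by
  intro T hT
  set N1 : ℝ := max ‖(1:𝔸)‖ 1 with hN1d
  have hN1 : (1:ℝ) ≤ N1 := le_max_right _ _
  have hN1' : ‖(1:𝔸)‖ ≤ N1 := le_max_left _ _
  have hN10 : (0:ℝ) ≤ N1 := le_trans zero_le_one hN1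
  set R0 : ℝ := T * (‖A‖ + ‖B‖) with hR0d
  have hR0 : 0 ≤ R0 := by positivity
  set es : ℝ := Real.exp R0 with hesd
  have hes1 : (1:ℝ) ≤ es := Real.one_le_exp hR0
  have hes0 : (0:ℝ) < es := Real.exp_pos _
  set D : ℝ := R0 * es * (R0 * es + 2) with hDd
  have hD : 0 ≤ D := by positivity
  set C : ℝ := N1 + Real.exp D + R0 * es with hCd
  have hC : 0 < C := by positivity
  set K : ℝ := (3 + 2*R0 + N1) * Real.exp (2*R0) with hKd
  have hK : 0 < K := by positivity
  refine ⟨C^2 * K * R0^2 + 1, by positivity, ?_⟩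
  intro n hn τ hτ
  obtain ⟨hτ0, hτT⟩ := hτ
  have hn0 : (0:ℝ) < n := by exact_mod_cast hn
  set t : ℝ := τ / n with htd
  have ht0 : 0 ≤ t := by positivity
  have htn : t * n = τ := by rw [htd]; field_simp
  set x : 𝔸 := -t • A with hxd
  set y : 𝔸 := -t • B with hyd
  set z : 𝔸 := -t • (A + B) with hzd
  have hxy : x + y = z := by rw [hxd, hyd, hzd, smul_add]
  have hnormx : ‖x‖ = t * ‖A‖ := by
    rw [hxd, norm_smul, Real.norm_eq_abs, abs_neg, abs_of_nonneg ht0]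
  have hnormy : ‖y‖ = t * ‖B‖ := by
    rw [hyd, norm_smul, Real.norm_eq_abs, abs_neg, abs_of_nonneg ht0]
  have hnormz : ‖z‖ ≤ t * (‖A‖ + ‖B‖) := by
    rw [hzd, norm_smul, Real.norm_eq_abs, abs_neg, abs_of_nonneg ht0]
    gcongr
    exact norm_add_le _ _
  have htT : t * n ≤ T := by rw [htn]; exact hτT
  set σ : ℝ := ‖x‖ + ‖y‖ with hσd
  have hσ0 : 0 ≤ σ := by positivity
  have hσR0n : σ * n ≤ R0 := by
    rw [hσd, hnormx, hnormy, hR0d]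
    calc (t*‖A‖ + t*‖B‖) * n = (t*n) * (‖A‖+‖B‖) := by ring
      _ ≤ T * (‖A‖+‖B‖) := by gcongr
  -- MARK1
  have hσm : σ ≤ R0 / n := (le_div_iff₀ hn0).mpr hσR0n
  have hσR0 : σ ≤ R0 := by
    have h1 : σ * 1 ≤ σ * n := by gcongr; exact_mod_cast hn
    linarith
  set S : 𝔸 := exp x * exp y with hSd
  set Tz : 𝔸 := exp z with hTzd
  have hgoal : exp (-τ • (A + B)) = Tz ^ n := by
    letI : NormedAlgebra ℚ 𝔸 := .restrictScalars ℚ ℝ 𝔸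
    rw [hTzd, ← exp_nsmul, ← Nat.cast_smul_eq_nsmul ℝ n z, hzd, smul_smul]
    congr 1
    rw [← htn]
    ring
  rw [hgoal]
  -- bound on ‖S - Tz‖
  have hdiff : ‖S - Tz‖ ≤ K * σ^2 := by
    have h1 : ‖S - Tz‖ ≤ (3 + 2*σ + N1) * Real.exp (2*σ) * σ^2 := by
      rw [hSd, hTzd, ← hxy]
      exact exp_prod_err' x y
    refine le_trans h1 ?_
    have h2 : Real.exp (2*σ) ≤ Real.exp (2*R0) := by
      apply Real.exp_le_exp.mpr; linarith
    rw [hKd]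
    gcongr
  -- uniform power bounds
  have hSu : ‖S - 1‖ ≤ D / n := by
    have hid : S - 1 = (exp x - 1)*(exp y - 1) + (exp x - 1) + (exp y - 1) := by
      rw [hSd]; noncomm_ring
    have hxσ : ‖x‖ ≤ σ := by rw [hσd]; linarith [norm_nonneg y]
    have hyσ : ‖y‖ ≤ σ := by rw [hσd]; linarith [norm_nonneg x]
    have hx1 : ‖exp x - 1‖ ≤ σ * es := by
      refine le_trans (tail1' x) ?_
      have h : Real.exp ‖x‖ ≤ es := by
        rw [hesd]; exact Real.exp_le_exp.mpr (le_trans hxσ hσR0)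
      exact mul_le_mul hxσ h (Real.exp_pos _).le hσ0
    have hy1 : ‖exp y - 1‖ ≤ σ * es := by
      refine le_trans (tail1' y) ?_
      have h : Real.exp ‖y‖ ≤ es := by
        rw [hesd]; exact Real.exp_le_exp.mpr (le_trans hyσ hσR0)
      exact mul_le_mul hyσ h (Real.exp_pos _).le hσ0
    have hσes : 0 ≤ σ * es := by positivity
    calc ‖S - 1‖ ≤ ‖(exp x - 1)*(exp y - 1)‖ + ‖exp x - 1‖ + ‖exp y - 1‖ := by
          rw [hid]
          refine le_trans (norm_add_le _ _) ?_
          gcongr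
          exact norm_add_le _ _
      _ ≤ (σ*es)*(σ*es) + σ*es + σ*es := by
          refine add_le_add (add_le_add ?_ hx1) hy1
          refine le_trans (norm_mul_le _ _) ?_
          exact mul_le_mul hx1 hy1 (norm_nonneg _) hσes
      _ ≤ ((R0/n)*es)*(R0*es) + (R0/n)*es + (R0/n)*es := by
          gcongr
      _ = D / n := by rw [hDd]; field_simp; ring
  have hSpow : ∀ k, k ≤ n → ‖S^k‖ ≤ C := by
    intro k hk
    have hS1 : S = 1 + (S - 1) := by abel
    have h1 : ‖S^k - 1‖ ≤ (1+‖S-1‖)^k - 1 := by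
      have := norm_one_add_pow_sub_one' (S - 1) k
      rwa [← hS1] at this
    have h2 : (1+‖S-1‖)^k ≤ Real.exp D := by
      calc (1+‖S-1‖)^k ≤ (Real.exp ‖S-1‖)^k := by
            gcongr
            linarith [Real.add_one_le_exp ‖S-1‖]
        _ = Real.exp (k * ‖S-1‖) := by rw [← Real.exp_nat_mul]
        _ ≤ Real.exp D := by
            apply Real.exp_le_exp.mpr
            calc (k:ℝ) * ‖S-1‖ ≤ n * (D/n) := by
                  apply mul_le_mul _ hSu (norm_nonneg _) hn0.le
                  exact_mod_cast hk
              _ = D := by field_simp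
    calc ‖S^k‖ ≤ ‖S^k - 1‖ + ‖(1:𝔸)‖ := by
          refine le_trans ?_ (norm_add_le _ _)
          apply le_of_eq; congr 1; abel
      _ ≤ ((1+‖S-1‖)^k - 1) + N1 := add_le_add h1 hN1'
      _ ≤ (Real.exp D - 1) + N1 := by linarith
      _ ≤ C := by rw [hCd]; nlinarith [mul_nonneg hR0 hes0.le]
  have hTpow : ∀ k, k ≤ n → ‖Tz^k‖ ≤ C := by
    intro k hk
    have hTk : Tz^k = exp (k • z) := by
      letI : NormedAlgebra ℚ 𝔸 := .restrictScalars ℚ ℝ 𝔸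
      rw [hTzd, exp_nsmul]
    have hkz : ‖k • z‖ ≤ R0 := by
      refine le_trans norm_nsmul_le ?_
      calc (k:ℝ) * ‖z‖ ≤ n * (t * (‖A‖+‖B‖)) := by
            apply mul_le_mul _ hnormz (norm_nonneg _) hn0.le
            exact_mod_cast hk
        _ = (t*n) * (‖A‖+‖B‖) := by ring
        _ ≤ T * (‖A‖+‖B‖) := by gcongr
        _ = R0 := hR0d.symm
    have h1 : ‖exp (k • z) - 1‖ ≤ R0 * es := by
      refine le_trans (tail1' _) ?_
      apply mul_le_mul hkz _ (Real.exp_pos _).le hR0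
      rw [hesd]; exact Real.exp_le_exp.mpr hkz
    rw [hTk]
    calc ‖exp (k • z)‖ ≤ ‖exp (k • z) - 1‖ + ‖(1:𝔸)‖ := by
          refine le_trans ?_ (norm_add_le _ _)
          apply le_of_eq; congr 1; abel
      _ ≤ R0 * es + N1 := add_le_add h1 hN1'
      _ ≤ C := by rw [hCd]; linarith [Real.exp_pos D]
  have hns2 : (n:ℝ) * σ^2 ≤ R0^2 / n := by
    rw [le_div_iff₀ hn0]
    calc (n:ℝ) * σ^2 * n = (σ*n)^2 := by ring
      _ ≤ R0^2 := by gcongr <;> positivity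
  calc ‖S^n - Tz^n‖ ≤ n * C^2 * ‖S - Tz‖ := norm_pow_sub_pow_le' S Tz C n hSpow hTpow
    _ ≤ n * C^2 * (K * σ^2) := by gcongr
    _ = C^2 * K * (n * σ^2) := by ring
    _ ≤ C^2 * K * (R0^2/n) := by gcongr
    _ = C^2 * K * R0^2 / n := by ring
    _ ≤ (C^2 * K * R0^2 + 1) / n := by gcongr; linarith
end

section
/- Let β ∈ (0,1] and let q : [0,1] → ℝ be nonnegative and satisfy the Hölder condition |q(x) − q(y)| ≤ L·|x − y|^β for all x, y ∈ [0,1] and some L > 0. Then there exists a constant C > 0 such that for every n ≥ 1, sup over all pairs (t,s) with 0 ≤ s < t ≤ 1 of |e^{−∫_s^t q(y) dy} − e^{−S_n(t,s;q)}| ≤ C/n^β. (This is the scalar form of the operator-norm Trotter product estimate ‖e^{−τ(D_0+Q)} − (e^{−τD_0/n} e^{−τQ/n})^n‖ = O(1/n^β) for the perturbed shift generator.) -/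
open MeasureTheory

lemma exp_abs_sub_aux {A B : ℝ} (hA : 0 ≤ A) (hB : 0 ≤ B) :
    |Real.exp (-A) - Real.exp (-B)| ≤ |A - B| := by
  wlog hle : A ≤ B generalizing A B
  · rw [abs_sub_comm, abs_sub_comm A B]
    exact this hB hA (le_of_not_ge hle)
  have h1 : Real.exp (-B) ≤ Real.exp (-A) := Real.exp_le_exp.mpr (by linarith)
  rw [abs_of_nonneg (by linarith), abs_of_nonpos (by linarith)]
  have key : Real.exp (-A) - Real.exp (-B) ≤ B - A := by
    have hfac : Real.exp (-A) - Real.exp (-B) = Real.exp (-A) * (1 - Real.exp (A - B)) := by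
      rw [mul_sub, mul_one, ← Real.exp_add]
      ring_nf
    have h2 : Real.exp (-A) ≤ 1 := Real.exp_le_one_iff.mpr (by linarith)
    have h3 : (A - B) + 1 ≤ Real.exp (A - B) := Real.add_one_le_exp _
    have h4 : 0 ≤ 1 - Real.exp (A - B) := by
      have := Real.exp_le_one_iff.mpr (show A - B ≤ 0 by linarith)
      linarith
    calc Real.exp (-A) - Real.exp (-B) = Real.exp (-A) * (1 - Real.exp (A - B)) := hfac
      _ ≤ 1 * (1 - Real.exp (A - B)) := by nlinarith
      _ ≤ B - A := by linarith
  linarith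

/-- Scalar form of the operator-norm Trotter estimate
`‖e^{−τ(D₀+Q)} − (e^{−τD₀/n} e^{−τQ/n})^n‖ = O(1/n^β)` for a nonnegative
Hölder continuous `q`: there is `C > 0` such that for all `n ≥ 1` and all
`0 ≤ s < t ≤ 1`, `|e^{−∫_s^t q} − e^{−S_n(t,s;q)}| ≤ C/n^β`. -/
theorem trotter_rate_holder (q : ℝ → ℝ) (β L : ℝ)
    (hβ0 : 0 < β) (hβ1 : β ≤ 1) (hL : 0 < L)
    (hpos : ∀ y ∈ Set.Icc (0:ℝ) 1, 0 ≤ q y)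
    (hq : ∀ x ∈ Set.Icc (0:ℝ) 1, ∀ y ∈ Set.Icc (0:ℝ) 1,
      |q x - q y| ≤ L * |x - y| ^ β) :
    ∃ C : ℝ, 0 < C ∧ ∀ n : ℕ, 1 ≤ n → ∀ s t : ℝ, 0 ≤ s → s < t → t ≤ 1 →
      |Real.exp (-(∫ y in s..t, q y)) -
          Real.exp (-((t - s) / n * ∑ k ∈ Finset.range n, q (s + k * (t - s) / n)))| ≤
        C / (n : ℝ) ^ β := by
  have hβ' : (0:ℝ) ≤ β := hβ0.le
  have hL' : (0:ℝ) ≤ L := hL.le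
  -- continuity of q on [0,1]
  have hcont : ContinuousOn q (Set.Icc (0:ℝ) 1) := by
    have hH : HolderOnWith L.toNNReal β.toNNReal q (Set.Icc (0:ℝ) 1) := by
      intro x hx y hy
      rw [edist_dist, edist_dist]
      calc ENNReal.ofReal (dist (q x) (q y))
          ≤ ENNReal.ofReal (L * dist x y ^ β) := by
            apply ENNReal.ofReal_le_ofReal
            rw [Real.dist_eq, Real.dist_eq]
            exact hq x hx y hy
        _ = _ := by
            rw [ENNReal.ofReal_mul hL', Real.coe_toNNReal β hβ',
              ENNReal.ofReal_rpow_of_nonneg dist_nonneg hβ']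
            rfl
    exact hH.continuousOn (Real.toNNReal_pos.mpr hβ0)
  refine ⟨L, hL, ?_⟩
  intro n hn s t hs hst ht
  have hn0 : (0:ℝ) < n := by positivity
  set h : ℝ := (t - s) / n with hh_def
  have hh0 : 0 < h := div_pos (by linarith) hn0
  set a : ℕ → ℝ := fun k => s + k * h with ha_def
  have hnh : (n:ℝ) * h = t - s := by
    rw [hh_def]; field_simp [hn0.ne']
  have hmem : ∀ k : ℕ, k ≤ n → a k ∈ Set.Icc s t := by
    intro k hk
    constructor
    · have : (0:ℝ) ≤ (k:ℝ) * h := by positivity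
      simp only [ha_def]; linarith
    · have : (k:ℝ) * h ≤ (n:ℝ) * h := by
        apply mul_le_mul_of_nonneg_right _ hh0.le
        exact_mod_cast hk
      simp only [ha_def]
      linarith [hnh]
  have hsub : Set.Icc s t ⊆ Set.Icc (0:ℝ) 1 := Set.Icc_subset_Icc hs ht
  have hsucc : ∀ k : ℕ, a (k + 1) - a k = h := by
    intro k
    simp only [ha_def]
    push_cast
    ring
  have hle : ∀ k : ℕ, a k ≤ a (k + 1) := by
    intro k; have := hsucc k; linarith
  have hint : ∀ k, k < n → IntervalIntegrable q volume (a k) (a (k + 1)) := by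
    intro k hk
    apply ContinuousOn.intervalIntegrable
    apply hcont.mono
    rw [Set.uIcc_of_le (hle k)]
    exact (Set.Icc_subset_Icc (hmem k hk.le).1 (hmem (k+1) hk).2).trans hsub
  have ha0 : a 0 = s := by simp [ha_def]
  have han : a n = t := by simp only [ha_def]; linarith [hnh]
  have hsplit : (∫ y in s..t, q y) = ∑ k ∈ Finset.range n, ∫ y in a k..a (k + 1), q y := by
    rw [intervalIntegral.sum_integral_adjacent_intervals hint, ha0, han]
  have hSn : (t - s) / n * ∑ k ∈ Finset.range n, q (s + k * (t - s) / n)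
      = ∑ k ∈ Finset.range n, h * q (a k) := by
    rw [Finset.mul_sum]
    apply Finset.sum_congr rfl
    intro k _
    congr 2
    simp only [ha_def, hh_def]
    ring
  -- per-interval bound
  have hterm : ∀ k, k < n →
      |(∫ y in a k..a (k + 1), q y) - h * q (a k)| ≤ L * h ^ β * h := by
    intro k hk
    have hconst : h * q (a k) = ∫ _ in a k..a (k + 1), q (a k) := by
      rw [intervalIntegral.integral_const, smul_eq_mul, hsucc k]
    rw [hconst, ← intervalIntegral.integral_sub (hint k hk) intervalIntegrable_const]
    have := intervalIntegral.norm_integral_le_of_norm_le_const (a := a k) (b := a (k+1))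
      (C := L * h ^ β) (f := fun y => q y - q (a k)) ?_
    · rw [Real.norm_eq_abs] at this
      calc |∫ y in a k..a (k + 1), (q y - q (a k))| ≤ L * h ^ β * |a (k+1) - a k| := this
        _ = L * h ^ β * h := by rw [hsucc k, abs_of_pos hh0]
    · intro y hy
      rw [Set.uIoc_of_le (hle k)] at hy
      have hy1 : a k ≤ y := hy.1.le
      have hy2 : y ≤ a (k + 1) := hy.2
      have hyI : y ∈ Set.Icc (0:ℝ) 1 :=
        hsub ⟨(hmem k hk.le).1.trans hy1, hy2.trans (hmem (k+1) hk).2⟩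
      have hakI : a k ∈ Set.Icc (0:ℝ) 1 := hsub (hmem k hk.le)
      rw [Real.norm_eq_abs]
      calc |q y - q (a k)| ≤ L * |y - a k| ^ β := hq y hyI (a k) hakI
        _ ≤ L * h ^ β := by
            apply mul_le_mul_of_nonneg_left _ hL'
            apply Real.rpow_le_rpow (abs_nonneg _) _ hβ'
            rw [abs_of_nonneg (by linarith)]
            linarith [hsucc k]
  -- total difference bound
  have hdiff : |(∫ y in s..t, q y) -
      (t - s) / n * ∑ k ∈ Finset.range n, q (s + k * (t - s) / n)| ≤ L / (n:ℝ) ^ β := by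
    rw [hsplit, hSn, ← Finset.sum_sub_distrib]
    calc |∑ k ∈ Finset.range n, ((∫ y in a k..a (k + 1), q y) - h * q (a k))|
        ≤ ∑ k ∈ Finset.range n, |(∫ y in a k..a (k + 1), q y) - h * q (a k)| :=
          Finset.abs_sum_le_sum_abs _ _
      _ ≤ ∑ _k ∈ Finset.range n, L * h ^ β * h :=
          Finset.sum_le_sum (fun k hk => hterm k (Finset.mem_range.mp hk))
      _ = (n:ℝ) * (L * h ^ β * h) := by rw [Finset.sum_const, Finset.card_range, nsmul_eq_mul]
      _ = L * h ^ β * (t - s) := by rw [← hnh]; ring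
      _ ≤ L * h ^ β * 1 := by
          apply mul_le_mul_of_nonneg_left (by linarith)
          positivity
      _ ≤ L / (n:ℝ) ^ β := by
          rw [mul_one, div_eq_mul_inv, ← Real.inv_rpow hn0.le]
          apply mul_le_mul_of_nonneg_left _ hL'
          apply Real.rpow_le_rpow hh0.le _ hβ'
          rw [hh_def, div_le_iff₀ hn0, inv_mul_cancel₀ hn0.ne']
          linarith
  -- nonnegativity
  have hInonneg : 0 ≤ ∫ y in s..t, q y :=
    intervalIntegral.integral_nonneg hst.le (fun u hu => hpos u (hsub hu))
  have hSnonneg : 0 ≤ (t - s) / n * ∑ k ∈ Finset.range n, q (s + k * (t - s) / n) := by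
    rw [hSn]
    apply Finset.sum_nonneg
    intro k hk
    exact mul_nonneg hh0.le (hpos _ (hsub (hmem k (Finset.mem_range.mp hk).le)))
  exact (exp_abs_sub_aux hInonneg hSnonneg).trans hdiff
end

section
/- Let q : [0,1] → ℝ be continuous and nonnegative. Then sup over all pairs (t,s) with 0 ≤ s < t ≤ 1 of |e^{−∫_s^t q(y) dy} − e^{−S_n(t,s;q)}| tends to 0 as n → ∞. (This is the scalar form of the operator-norm Trotter convergence ‖e^{−τ(D_0+Q)} − (e^{−τD_0/n} e^{−τQ/n})^n‖ = o(1) for the perturbed shift generator.) -/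
open MeasureTheory

open MeasureTheory

lemma exp_lip' {a b : ℝ} (ha : 0 ≤ a) (hab : a ≤ b) :
    Real.exp (-a) - Real.exp (-b) ≤ b - a := by
  have h1 : Real.exp (-a) ≤ 1 := Real.exp_le_one_iff.mpr (by linarith)
  have h2 : Real.exp (-b) = Real.exp (-a) * Real.exp (a - b) := by
    rw [← Real.exp_add]; ring_nf
  have h3 : (a - b) + 1 ≤ Real.exp (a - b) := Real.add_one_le_exp _
  have h4 : Real.exp (a - b) ≤ 1 := Real.exp_le_one_iff.mpr (by linarith)
  nlinarith [Real.exp_pos (-a), Real.exp_pos (a - b)]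

lemma exp_lip {a b : ℝ} (ha : 0 ≤ a) (hb : 0 ≤ b) :
    |Real.exp (-a) - Real.exp (-b)| ≤ |a - b| := by
  rcases le_total a b with h | h
  · rw [abs_of_nonneg (by simp [Real.exp_le_exp]; linarith), abs_of_nonpos (by linarith)]
    linarith [exp_lip' ha h]
  · rw [abs_of_nonpos (by simp [Real.exp_le_exp]; linarith), abs_of_nonneg (by linarith)]
    linarith [exp_lip' hb h]
open MeasureTheory

lemma riemann_est (q : ℝ → ℝ) (hq : ContinuousOn q (Set.Icc (0:ℝ) 1)) {ε δ : ℝ}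
    (hε : 0 ≤ ε)
    (hδ' : ∀ x ∈ Set.Icc (0:ℝ) 1, ∀ y ∈ Set.Icc (0:ℝ) 1, |x - y| < δ → |q x - q y| ≤ ε)
    {n : ℕ} (hn : 1 ≤ n) (hnδ : 1/(n:ℝ) < δ) {s t : ℝ}
    (hs : 0 ≤ s) (hst : s < t) (ht : t ≤ 1) :
    |(∫ y in s..t, q y) - (t - s)/n * ∑ k ∈ Finset.range n, q (s + k*(t-s)/n)| ≤ ε := by
  have hn0 : (0:ℝ) < n := by exact_mod_cast hn
  obtain ⟨a, ha⟩ : ∃ a : ℕ → ℝ, a = fun k : ℕ => s + (k:ℝ)*(t-s)/n := ⟨_, rfl⟩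
  have hh : (0:ℝ) < (t-s)/n := div_pos (by linarith) hn0
  have hstep : ∀ k : ℕ, a (k+1) - a k = (t-s)/n := by
    intro k; rw [ha]; push_cast; field_simp; ring
  have hle : ∀ k : ℕ, a k ≤ a (k+1) := by
    intro k; have := hstep k; linarith
  have hmem : ∀ k ≤ n, a k ∈ Set.Icc (0:ℝ) 1 := by
    intro k hk
    have hkn : (k:ℝ) ≤ n := by exact_mod_cast hk
    constructor
    · have : 0 ≤ (k:ℝ)*(t-s)/n := div_nonneg (by nlinarith) (le_of_lt hn0)
      rw [ha]; simp only []; linarith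
    · have : (k:ℝ)*(t-s)/n ≤ t - s := by
        rw [div_le_iff₀ hn0]; nlinarith
      rw [ha]; simp only []; linarith
  have hsub : ∀ k < n, Set.uIcc (a k) (a (k+1)) ⊆ Set.Icc (0:ℝ) 1 := by
    intro k hk
    rw [Set.uIcc_of_le (hle k)]
    exact Set.Icc_subset_Icc (hmem k (le_of_lt hk)).1 (hmem (k+1) hk).2
  have hint : ∀ k < n, IntervalIntegrable q volume (a k) (a (k+1)) :=
    fun k hk => (hq.mono (hsub k hk)).intervalIntegrable
  have ha0 : a 0 = s := by rw [ha]; simp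
  have han : a n = t := by rw [ha]; field_simp; ring
  have hsplit : (∫ y in s..t, q y) = ∑ k ∈ Finset.range n, ∫ y in a k..a (k+1), q y := by
    rw [intervalIntegral.sum_integral_adjacent_intervals hint, ha0, han]
  have hsum : (t - s)/n * ∑ k ∈ Finset.range n, q (s + k*(t-s)/n)
      = ∑ k ∈ Finset.range n, (t-s)/n * q (a k) := by
    rw [Finset.mul_sum, ha]
  rw [hsplit, hsum, ← Finset.sum_sub_distrib]
  calc |∑ k ∈ Finset.range n, ((∫ y in a k..a (k+1), q y) - (t-s)/n * q (a k))|
      ≤ ∑ k ∈ Finset.range n, |(∫ y in a k..a (k+1), q y) - (t-s)/n * q (a k)| :=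
        Finset.abs_sum_le_sum_abs _ _
    _ ≤ ∑ k ∈ Finset.range n, ε * ((t-s)/n) := by
        apply Finset.sum_le_sum
        intro k hk
        rw [Finset.mem_range] at hk
        have hconst : (t-s)/n * q (a k) = ∫ _ in a k..a (k+1), q (a k) := by
          rw [intervalIntegral.integral_const, hstep k, smul_eq_mul]
        rw [hconst, ← intervalIntegral.integral_sub (hint k hk)
          (intervalIntegrable_const)]
        have key := intervalIntegral.norm_integral_le_of_norm_le_const
          (f := fun y => q y - q (a k)) (a := a k) (b := a (k+1)) (C := ε) ?_
        · rw [Real.norm_eq_abs] at key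
          calc _ ≤ ε * |a (k+1) - a k| := key
            _ = ε * ((t-s)/n) := by rw [hstep k, abs_of_pos hh]
        · intro y hy
          have hy' : y ∈ Set.Icc (0:ℝ) 1 := hsub k hk (Set.uIoc_subset_uIcc hy)
          rw [Set.uIoc_of_le (hle k)] at hy
          have hdist : |y - a k| < δ := by
            have h1 : (t-s)/n ≤ 1/n := by gcongr; linarith
            have h2 := hstep k
            rw [abs_of_nonneg (by linarith [hy.1])]
            linarith [hy.2]
          rw [Real.norm_eq_abs]
          exact hδ' y hy' (a k) (hsub k hk (Set.left_mem_uIcc ..)) hdist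
    _ = (n:ℝ) * (ε * ((t-s)/n)) := by rw [Finset.sum_const, Finset.card_range]; simp
    _ = ε * (t-s) := by field_simp
    _ ≤ ε := by nlinarith

/-- Scalar form of the operator-norm Trotter convergence
`‖e^{−τ(D₀+Q)} − (e^{−τD₀/n} e^{−τQ/n})^n‖ = o(1)` for a continuous
nonnegative `q`:
`sup_{0 ≤ s < t ≤ 1} |e^{−∫_s^t q} − e^{−S_n(t,s;q)}| → 0` as `n → ∞`. -/
theorem trotter_continuous_convergence (q : ℝ → ℝ)
    (hq : ContinuousOn q (Set.Icc (0:ℝ) 1))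
    (hpos : ∀ y ∈ Set.Icc (0:ℝ) 1, 0 ≤ q y) :
    Filter.Tendsto
      (fun n : ℕ => sSup {r : ℝ | ∃ s t : ℝ, 0 ≤ s ∧ s < t ∧ t ≤ 1 ∧
        r = |Real.exp (-(∫ y in s..t, q y)) -
              Real.exp (-((t - s) / n *
                ∑ k ∈ Finset.range n, q (s + k * (t - s) / n)))|})
      Filter.atTop (nhds 0) := by
  have huc : UniformContinuousOn q (Set.Icc (0:ℝ) 1) :=
    isCompact_Icc.uniformContinuousOn_of_continuous hq
  rw [Metric.tendsto_atTop]
  intro ε hε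
  obtain ⟨δ, hδ, hδ'⟩ := Metric.uniformContinuousOn_iff.mp huc (ε/4) (by linarith)
  have hδ'' : ∀ x ∈ Set.Icc (0:ℝ) 1, ∀ y ∈ Set.Icc (0:ℝ) 1,
      |x - y| < δ → |q x - q y| ≤ ε/4 := by
    intro x hx y hy hxy
    have := hδ' x hx y hy (by rwa [Real.dist_eq])
    rw [Real.dist_eq] at this; linarith
  obtain ⟨N, hN⟩ := exists_nat_gt (1/δ)
  refine ⟨max N 1, fun n hn => ?_⟩
  have hn1 : 1 ≤ n := le_trans (le_max_right N 1) hn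
  have hnN : (N:ℝ) ≤ n := by exact_mod_cast le_trans (le_max_left N 1) hn
  have hn0 : (0:ℝ) < n := by exact_mod_cast hn1
  have hnδ : 1/(n:ℝ) < δ := by
    rw [div_lt_iff₀ hn0]
    have h1 : 1/δ < (n:ℝ) := lt_of_lt_of_le hN hnN
    rw [div_lt_iff₀ hδ] at h1
    linarith [h1]
  set S := {r : ℝ | ∃ s t : ℝ, 0 ≤ s ∧ s < t ∧ t ≤ 1 ∧
        r = |Real.exp (-(∫ y in s..t, q y)) -
              Real.exp (-((t - s) / n *
                ∑ k ∈ Finset.range n, q (s + k * (t - s) / n)))|} with hS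
  have hbound : ∀ r ∈ S, r ≤ ε/4 := by
    rintro r ⟨s, t, hs, hst, ht, rfl⟩
    have hA : 0 ≤ ∫ y in s..t, q y := by
      apply intervalIntegral.integral_nonneg (le_of_lt hst)
      intro u hu
      exact hpos u ⟨by linarith [hu.1], by linarith [hu.2]⟩
    have hB : 0 ≤ (t - s) / n * ∑ k ∈ Finset.range n, q (s + k * (t - s) / n) := by
      apply mul_nonneg (div_nonneg (by linarith) (le_of_lt hn0))
      apply Finset.sum_nonneg
      intro k hk
      rw [Finset.mem_range] at hk
      have hkn : (k:ℝ) ≤ n := by exact_mod_cast le_of_lt hk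
      have h1 : 0 ≤ (k:ℝ)*(t-s)/n := div_nonneg (by nlinarith) (le_of_lt hn0)
      have h2 : (k:ℝ)*(t-s)/n ≤ t - s := by rw [div_le_iff₀ hn0]; nlinarith
      have : (k:ℝ) * (t - s) / n = (k:ℝ) * ((t-s)/n) := by ring
      apply hpos
      constructor
      · have : s + (k:ℝ)*(t-s)/n = s + k*(t-s)/n := by ring
        nlinarith [h1]
      · nlinarith [h2]
    calc |Real.exp (-(∫ y in s..t, q y)) -
          Real.exp (-((t - s) / n * ∑ k ∈ Finset.range n, q (s + k * (t - s) / n)))|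
        ≤ |(∫ y in s..t, q y) -
            (t - s) / n * ∑ k ∈ Finset.range n, q (s + k * (t - s) / n)| :=
          exp_lip hA hB
      _ ≤ ε/4 := riemann_est q hq (by linarith) hδ'' hn1 hnδ hs hst ht
  have hne : ∃ r, r ∈ S ∧ 0 ≤ r := by
    refine ⟨_, ⟨0, 1, le_refl 0, one_pos, le_refl 1, rfl⟩, abs_nonneg _⟩
  obtain ⟨r0, hr0S, hr00⟩ := hne
  have hbdd : BddAbove S := ⟨ε/4, fun r hr => hbound r hr⟩
  have h0 : 0 ≤ sSup S := le_trans hr00 (le_csSup hbdd hr0S)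
  have hle : sSup S ≤ ε/4 := Real.sSup_le hbound (by linarith)
  rw [Real.dist_eq, sub_zero, abs_of_nonneg h0]
  linarith
end

section
/- For every sequence of positive reals (δ_n)_{n∈ℕ} with δ_n → 0, there exists a continuous nonnegative function q : [0,1] → ℝ such that limsup_{n→∞} (1/δ_n)·|∫_0^1 q(y) dy − (1/n)·Σ_{k=0}^{n−1} q(k/n)| = ∞; i.e. the equidistant left-endpoint Riemann sums of q converge to the integral more slowly than any prescribed rate. -/
open MeasureTheory
open Real



lemma sum_cos_zero' (n N : ℕ) (hn : 0 < n) (h : ¬ (n ∣ N)) :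
    ∑ k ∈ Finset.range n, Real.cos (2 * π * N * k / n) = 0 := by
  have hne : (n:ℝ) ≠ 0 := Nat.cast_ne_zero.mpr hn.ne'
  have hneC : (n:ℂ) ≠ 0 := Nat.cast_ne_zero.mpr hn.ne'
  have hζ : ∀ k : ℕ, Complex.exp (((2 * π * N * k / n : ℝ)) * Complex.I)
      = (Complex.exp (((2 * π * N / n : ℝ)) * Complex.I)) ^ k := by
    intro k
    rw [← Complex.exp_nat_mul]
    congr 1
    push_cast
    ring
  set z := Complex.exp (((2 * π * N / n : ℝ)) * Complex.I) with hzdef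
  have hz1 : z ≠ 1 := by
    intro hz
    rw [hzdef, Complex.exp_eq_one_iff] at hz
    obtain ⟨m, hm⟩ := hz
    have hm' : (2 * π * N / n : ℝ) = m * (2 * π) := by
      have := congrArg Complex.im hm
      simpa using this
    have hπ : (0:ℝ) < π := Real.pi_pos
    have hNn : (N : ℝ) = m * n := by
      field_simp at hm'
      nlinarith [hm']
    have hNi : (N : ℤ) = m * n := by exact_mod_cast hNn
    exact h (Int.natCast_dvd_natCast.mp ⟨m, by linarith [mul_comm m (n:ℤ)]⟩)
  have hzn : z ^ n = 1 := by
    rw [hzdef, ← Complex.exp_nat_mul]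
    rw [Complex.exp_eq_one_iff]
    refine ⟨N, ?_⟩
    push_cast
    field_simp
  have key : ∑ k ∈ Finset.range n, Complex.exp (((2 * π * N * k / n : ℝ)) * Complex.I) = 0 := by
    simp_rw [hζ]
    rw [geom_sum_eq hz1, hzn]
    simp
  calc ∑ k ∈ Finset.range n, Real.cos (2 * π * N * k / n)
      = (∑ k ∈ Finset.range n, Complex.exp (((2 * π * N * k / n : ℝ)) * Complex.I)).re := by
        rw [Complex.re_sum]
        exact Finset.sum_congr rfl fun k _ => (Complex.exp_ofReal_mul_I_re _).symm
    _ = 0 := by rw [key]; rfl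



lemma cos_dvd' (n N k : ℕ) (hn : 0 < n) (h : n ∣ N) :
    Real.cos (2 * π * N * k / n) = 1 := by
  obtain ⟨d, rfl⟩ := h
  have hne : (n:ℝ) ≠ 0 := Nat.cast_ne_zero.mpr hn.ne'
  have : (2 * π * (n * d : ℕ) * k / n : ℝ) = (d * k : ℕ) * (2 * π) := by
    push_cast
    field_simp
  rw [this, Real.cos_nat_mul_two_pi]

lemma integral_one_sub_cos' (N : ℕ) (hN : 0 < N) :
    ∫ y in (0:ℝ)..1, (1 - Real.cos (2 * π * N * y)) = 1 := by
  have hc : (2 * π * N : ℝ) ≠ 0 := by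
    have := Real.pi_pos
    positivity
  have h1 : ∫ y in (0:ℝ)..1, Real.cos (2 * π * N * y) = 0 := by
    have := intervalIntegral.integral_comp_mul_left (fun x => Real.cos x) hc (a := 0) (b := 1)
    simp only [mul_zero, mul_one] at this
    rw [this, integral_cos]
    have : Real.sin (2 * π * N) = 0 := by
      have : (2 * π * N : ℝ) = (2 * N : ℕ) * π := by push_cast; ring
      rw [this, Real.sin_nat_mul_pi]
    simp [this]
  have hint : IntervalIntegrable (fun y => Real.cos (2 * π * N * y)) MeasureTheory.volume 0 1 :=
    (Real.continuous_cos.comp (continuous_const.mul continuous_id)).intervalIntegrable 0 1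
  rw [intervalIntegral.integral_sub intervalIntegrable_const hint, h1]
  simp

/-- The convergence of equidistant left-endpoint Riemann sums of a continuous
function can be arbitrarily slow: for every positive sequence `δ_n → 0` there
is a continuous nonnegative `q : [0,1] → ℝ` with
`limsup_n (1/δ_n)·|∫_0^1 q − (1/n)Σ_{k<n} q(k/n)| = ∞`, expressed as: for every
`M` the quantity exceeds `M` frequently (for infinitely many `n`). -/
theorem riemann_sum_arbitrarily_slow (δ : ℕ → ℝ) (hδpos : ∀ n, 0 < δ n)
    (hδ : Filter.Tendsto δ Filter.atTop (nhds 0)) :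
    ∃ q : ℝ → ℝ, ContinuousOn q (Set.Icc (0:ℝ) 1) ∧
      (∀ y ∈ Set.Icc (0:ℝ) 1, 0 ≤ q y) ∧
      ∀ M : ℝ, ∃ᶠ n in Filter.atTop,
        M < (1 / δ n) *
          |(∫ y in (0:ℝ)..1, q y) - (1 / n) * ∑ k ∈ Finset.range n, q (k / n)| := by
  classical
  have hK : ∀ i : ℕ, ∃ K : ℕ, ∀ n ≥ K, δ n < (1/4:ℝ)^i := by
    intro i
    have hpos : (0:ℝ) < (1/4)^i := by positivity
    exact Filter.eventually_atTop.mp (hδ.eventually (gt_mem_nhds hpos))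
  choose K hKspec using hK
  set m : ℕ → ℕ := fun i => Nat.rec (K 0) (fun i mi => max (mi + 1) (K (i+1))) i with hm
  have hmsucc : ∀ i, m (i+1) = max (m i + 1) (K (i+1)) := fun i => rfl
  have hmono : StrictMono m := strictMono_nat_of_lt_succ (fun i => by
    rw [hmsucc]; exact lt_of_lt_of_le (Nat.lt_succ_self _) (le_max_left _ _))
  have hmK : ∀ i, K i ≤ m i := by
    intro i
    cases i with
    | zero => exact le_refl _
    | succ i => rw [hmsucc]; exact le_max_right _ _
  set N : ℕ → ℕ := fun i => 2 ^ (m i) with hNdef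
  have hNpos : ∀ i, 0 < N i := fun i => pow_pos (by norm_num) _
  have hδN : ∀ i, δ (N i) < (1/4:ℝ)^i := fun i =>
    hKspec i _ (le_trans (hmK i) (Nat.lt_two_pow_self (n := m i)).le)
  have hdvd : ∀ i j, i ≤ j → N i ∣ N j := fun i j hij =>
    pow_dvd_pow 2 (hmono.monotone hij)
  have hndvd : ∀ i j, j < i → ¬ (N i ∣ N j) := by
    intro i j hji hd
    have := (Nat.pow_dvd_pow_iff_le_right (by norm_num)).mp hd
    exact absurd this (Nat.not_le.mpr (hmono hji))
  -- the function
  set F : ℕ → ℝ → ℝ := fun j x => (1/2:ℝ)^j * (1 - Real.cos (2 * Real.pi * (N j) * x)) with hF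
  set q : ℝ → ℝ := fun x => ∑' j, F j x with hq
  have hFcont : ∀ j, Continuous (F j) := fun j =>
    continuous_const.mul (continuous_const.sub
      (Real.continuous_cos.comp (continuous_const.mul continuous_id)))
  have hterm_bound : ∀ (j : ℕ) (x : ℝ), ‖F j x‖ ≤ 2 * (1/2:ℝ)^j := by
    intro j x
    have h1 : |1 - Real.cos (2 * Real.pi * (N j) * x)| ≤ 2 := by
      have := Real.cos_le_one (2 * Real.pi * (N j) * x)
      have := Real.neg_one_le_cos (2 * Real.pi * (N j) * x)
      rw [abs_le]; constructor <;> nlinarith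
    have hp : (0:ℝ) ≤ (1/2:ℝ)^j := by positivity
    calc ‖F j x‖ = (1/2:ℝ)^j * |1 - Real.cos (2 * Real.pi * (N j) * x)| := by
          rw [hF]; simp [Real.norm_eq_abs, abs_mul, abs_of_nonneg hp]
      _ ≤ (1/2:ℝ)^j * 2 := by nlinarith
      _ = 2 * (1/2:ℝ)^j := by ring
  have hsummable_u : Summable (fun j : ℕ => 2 * (1/2:ℝ)^j) :=
    (summable_geometric_of_lt_one (by norm_num) (by norm_num)).mul_left 2
  have hqcont : Continuous q := continuous_tsum hFcont hsummable_u hterm_bound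
  have hqnn : ∀ x, 0 ≤ q x := by
    intro x
    apply tsum_nonneg
    intro j
    have := Real.cos_le_one (2 * Real.pi * (N j) * x)
    apply mul_nonneg (by positivity)
    linarith
  -- integral
  have hFint : ∀ j, IntegrableOn (F j) (Set.Ioc (0:ℝ) 1) volume := fun j =>
    (hFcont j).integrableOn_Ioc
  have hFmeas : ∀ j, ∫ x in Set.Ioc (0:ℝ) 1, F j x = (1/2:ℝ)^j := by
    intro j
    rw [← intervalIntegral.integral_of_le (by norm_num : (0:ℝ) ≤ 1)]
    rw [hF]
    simp only []
    rw [intervalIntegral.integral_const_mul, integral_one_sub_cos' (N j) (hNpos j)]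
    ring
  have hFnormint : ∀ j, ∫ x in Set.Ioc (0:ℝ) 1, ‖F j x‖ ≤ 2 * (1/2:ℝ)^j := by
    intro j
    have h1 : ∫ x in Set.Ioc (0:ℝ) 1, ‖F j x‖ ≤ ∫ _x in Set.Ioc (0:ℝ) 1, (2 * (1/2:ℝ)^j) := by
      apply integral_mono (hFint j).norm (integrableOn_const (by simp))
      intro x
      exact hterm_bound j x
    have h2 : ∫ _x in Set.Ioc (0:ℝ) 1, (2 * (1/2:ℝ)^j) = 2 * (1/2:ℝ)^j := by
      rw [setIntegral_const]
      simp [Real.volume_Ioc]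
    linarith [h1, h2.le]
  have hFsum : Summable (fun j => ∫ x in Set.Ioc (0:ℝ) 1, ‖F j x‖) :=
    Summable.of_nonneg_of_le (fun j => integral_nonneg fun x => norm_nonneg _)
      hFnormint hsummable_u
  have hint_eq : ∫ y in (0:ℝ)..1, q y = 2 := by
    rw [intervalIntegral.integral_of_le (by norm_num : (0:ℝ) ≤ 1)]
    have hinter := integral_tsum_of_summable_integral_norm hFint hFsum
    rw [hq]
    rw [← hinter]
    have : ∀ j : ℕ, ∫ x in Set.Ioc (0:ℝ) 1, F j x = (1/2:ℝ)^j := hFmeas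
    rw [tsum_congr this, tsum_geometric_of_lt_one (by norm_num) (by norm_num)]
    norm_num
  -- Riemann sums at n = N i
  have hsumval : ∀ i, (1 / (N i : ℝ)) * ∑ k ∈ Finset.range (N i), q ((k:ℝ) / (N i))
      = 2 - 2 * (1/2:ℝ)^i := by
    intro i
    have hn := hNpos i
    have hnR : (0:ℝ) < (N i : ℝ) := by exact_mod_cast hn
    have hsums : ∀ k ∈ Finset.range (N i), Summable (fun j => F j ((k:ℝ) / (N i))) :=
      fun k _ => Summable.of_norm_bounded hsummable_u (fun j => hterm_bound j _)
    have hswap : ∑ k ∈ Finset.range (N i), q ((k:ℝ) / (N i))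
        = ∑' j, ∑ k ∈ Finset.range (N i), F j ((k:ℝ)/(N i)) := by
      rw [Summable.tsum_finsetSum hsums]
    have harg : ∀ (j k : ℕ), 2 * Real.pi * (N j : ℝ) * ((k:ℝ)/(N i))
        = 2 * Real.pi * (N j) * k / (N i) := fun j k => by ring
    have hjval : ∀ j, ∑ k ∈ Finset.range (N i), F j ((k:ℝ)/(N i))
        = if j < i then (1/2:ℝ)^j * (N i) else 0 := by
      intro j
      by_cases hj : j < i
      · rw [if_pos hj]
        have hz : ∑ k ∈ Finset.range (N i), Real.cos (2 * Real.pi * (N j) * k / (N i)) = 0 :=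
          sum_cos_zero' (N i) (N j) hn (hndvd i j hj)
        rw [hF]
        simp only []
        rw [← Finset.mul_sum]
        congr 1
        rw [Finset.sum_sub_distrib]
        simp_rw [harg j]
        rw [hz, Finset.sum_const, Finset.card_range]
        simp
      · rw [if_neg hj]
        apply Finset.sum_eq_zero
        intro k _
        rw [hF]
        simp only []
        rw [harg j k, cos_dvd' (N i) (N j) k hn (hdvd i j (le_of_not_gt hj))]
        ring
    rw [hswap, tsum_congr hjval]
    rw [tsum_eq_sum (s := Finset.range i) (by
      intro b hb
      rw [if_neg (by simpa using hb)])]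
    rw [Finset.sum_congr rfl (fun j hj => if_pos (Finset.mem_range.mp hj)), ← Finset.sum_mul]
    rw [geom_sum_eq (by norm_num : (1/2:ℝ) ≠ 1) i]
    field_simp
    ring
  -- conclusion
  refine ⟨q, hqcont.continuousOn, fun y _ => hqnn y, ?_⟩
  intro M
  rw [Filter.frequently_atTop]
  intro a
  obtain ⟨i0, hi0⟩ := exists_nat_gt M
  set i := max a i0 with hi
  refine ⟨N i, ?_, ?_⟩
  · calc a ≤ i := le_max_left _ _
      _ ≤ m i := hmono.le_apply
      _ ≤ N i := (Nat.lt_two_pow_self (n := m i)).le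
  · rw [hint_eq, hsumval i]
    have h2 : |2 - (2 - 2 * (1/2:ℝ)^i)| = 2 * (1/2:ℝ)^i := by
      rw [show (2:ℝ) - (2 - 2 * (1/2:ℝ)^i) = 2 * (1/2:ℝ)^i by ring]
      exact abs_of_nonneg (by positivity)
    rw [h2]
    have hδp := hδpos (N i)
    have hδlt := hδN i
    have h4 : (4:ℝ)^i < 1 / δ (N i) := by
      rw [lt_div_iff₀ hδp]
      calc (4:ℝ)^i * δ (N i) < (4:ℝ)^i * (1/4)^i := by
            apply mul_lt_mul_of_pos_left hδlt (by positivity)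
        _ = 1 := by rw [← mul_pow]; norm_num
    have hkey : (4:ℝ)^i * (2 * (1/2:ℝ)^i) = 2 * 2^i := by
      rw [show (4:ℝ) = 2 * 2 by norm_num, mul_pow]
      field_simp
      rw [← mul_pow]; norm_num
    have hMi : M < (i:ℝ) := lt_of_lt_of_le hi0 (by exact_mod_cast le_max_right a i0)
    have hi2 : (i:ℝ) < 2 * 2^i := by
      have : (i:ℕ) < 2^i := Nat.lt_two_pow_self (n := i)
      have h' : (i:ℝ) < (2:ℝ)^i := by exact_mod_cast this
      nlinarith [pow_pos (show (0:ℝ) < 2 by norm_num) i]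
    calc M < (i:ℝ) := hMi
      _ < 2 * 2^i := hi2
      _ = (4:ℝ)^i * (2 * (1/2:ℝ)^i) := hkey.symm
      _ < (1 / δ (N i)) * (2 * (1/2:ℝ)^i) := by
          apply mul_lt_mul_of_pos_right h4 (by positivity)
end

section
/- For every sequence of positive reals (δ_n)_{n∈ℕ} with δ_n → 0, there exists a continuous nonnegative function q : [0,1] → ℝ such that limsup_{n→∞} (1/δ_n) · sup over all pairs (t,s) with 0 ≤ s < t ≤ 1 of |∫_s^t q(y) dy − S_n(t,s;q)| = ∞. (This is the scalar form of Theorem 4.3: the operator-norm convergence of the Trotter product formula for the pair {D_0, Q} can be arbitrarily slow.) -/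
open MeasureTheory Filter intervalIntegral

noncomputable def Bmp (x : ℝ) : ℝ := max 0 (x - x^2)

lemma Bmp_nonneg (x : ℝ) : 0 ≤ Bmp x := le_max_left _ _

lemma Bmp_le (x : ℝ) : Bmp x ≤ 1/4 := by
  unfold Bmp
  apply max_le (by norm_num)
  nlinarith [sq_nonneg (x - 1/2)]

lemma Bmp_zero_of_nonpos {x : ℝ} (h : x ≤ 0) : Bmp x = 0 := by
  unfold Bmp
  apply max_eq_left
  nlinarith

lemma Bmp_zero_of_one_le {x : ℝ} (h : 1 ≤ x) : Bmp x = 0 := by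
  unfold Bmp
  apply max_eq_left
  nlinarith

lemma Bmp_cont : Continuous Bmp :=
  continuous_const.max (by fun_prop)

lemma Bmp_integral : ∫ x in (0:ℝ)..1, Bmp x = 1/6 := by
  have h : ∫ x in (0:ℝ)..1, Bmp x = ∫ x in (0:ℝ)..1, (x - x^2) := by
    apply intervalIntegral.integral_congr
    intro x hx
    rw [Set.uIcc_of_le (by norm_num)] at hx
    unfold Bmp
    apply max_eq_right
    nlinarith [hx.1, hx.2]
  have h2 : ∫ x in (0:ℝ)..1, (x - x^2) =
      (∫ x in (0:ℝ)..1, x) - ∫ x in (0:ℝ)..1, x^2 :=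
    intervalIntegral.integral_sub (by exact intervalIntegrable_id)
      (by exact intervalIntegrable_pow 2)
  rw [h, h2, integral_id, integral_pow]
  norm_num

lemma Bmp_natdiff (k m : ℕ) : Bmp ((k:ℝ) - m) = 0 := by
  rcases le_or_gt k m with h | h
  · apply Bmp_zero_of_nonpos
    have : (k:ℝ) ≤ m := by exact_mod_cast h
    linarith
  · apply Bmp_zero_of_one_le
    have : (m:ℝ) + 1 ≤ k := by exact_mod_cast h
    linarith

lemma comb_le (x : ℝ) (n : ℕ) : ∑ k ∈ Finset.range n, Bmp (x - k) ≤ 1/4 := by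
  rcases lt_or_ge x 0 with hx | hx
  · rw [Finset.sum_eq_zero (fun k _ => Bmp_zero_of_nonpos (by
      have : (0:ℝ) ≤ k := Nat.cast_nonneg k
      linarith))]
    norm_num
  · have hmx : (⌊x⌋₊ : ℝ) ≤ x := Nat.floor_le hx
    have hxm : x < ⌊x⌋₊ + 1 := Nat.lt_floor_add_one x
    have hz : ∀ k ∈ Finset.range n, k ≠ ⌊x⌋₊ → Bmp (x - k) = 0 := by
      intro k _ hk
      rcases lt_or_gt_of_ne hk with h | h
      · apply Bmp_zero_of_one_le
        have : (k:ℝ) + 1 ≤ ⌊x⌋₊ := by exact_mod_cast h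
        linarith
      · apply Bmp_zero_of_nonpos
        have : (⌊x⌋₊:ℝ) + 1 ≤ k := by exact_mod_cast h
        linarith
    by_cases hm : ⌊x⌋₊ ∈ Finset.range n
    · rw [Finset.sum_eq_single_of_mem _ hm hz]
      exact Bmp_le _
    · rw [Finset.sum_eq_zero (fun k hk => hz k hk (fun h => hm (h ▸ hk)))]
      norm_num


noncomputable def combF (ν : ℕ → ℕ) (j : ℕ) (y : ℝ) : ℝ :=
  (1/2)^j * ∑ k ∈ Finset.range (ν j),
    Bmp ((y - (1 - (1/2)^j)) * (ν j * 2^(j+1)) - k)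

lemma combF_nonneg (ν : ℕ → ℕ) (j : ℕ) (y : ℝ) : 0 ≤ combF ν j y :=
  mul_nonneg (by positivity) (Finset.sum_nonneg fun k _ => Bmp_nonneg _)

lemma combF_le (ν : ℕ → ℕ) (j : ℕ) (y : ℝ) : combF ν j y ≤ (1/2)^j * (1/4) :=
  mul_le_mul_of_nonneg_left (comb_le _ _) (by positivity)

lemma combF_cont (ν : ℕ → ℕ) (j : ℕ) : Continuous (combF ν j) :=
  continuous_const.mul (continuous_finset_sum _ fun k _ =>
    Bmp_cont.comp (by fun_prop))

lemma summable_aux : Summable (fun j : ℕ => (1/2:ℝ)^j * (1/4)) :=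
  (summable_geometric_of_lt_one (by norm_num) (by norm_num)).mul_right _

lemma summable_combF (ν : ℕ → ℕ) (y : ℝ) : Summable (fun j => combF ν j y) :=
  summable_aux.of_nonneg_of_le (fun j => combF_nonneg ν j y) (fun j => combF_le ν j y)

noncomputable def qF (ν : ℕ → ℕ) (y : ℝ) : ℝ := ∑' j, combF ν j y

lemma qF_cont (ν : ℕ → ℕ) : Continuous (qF ν) := by
  apply continuous_tsum (combF_cont ν) summable_aux
  intro j y
  rw [Real.norm_eq_abs, abs_of_nonneg (combF_nonneg ν j y)]
  exact combF_le ν j y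

lemma qF_nonneg (ν : ℕ → ℕ) (y : ℝ) : 0 ≤ qF ν y :=
  tsum_nonneg fun j => combF_nonneg ν j y

lemma qF_le_half (ν : ℕ → ℕ) (y : ℝ) : qF ν y ≤ 1/2 := by
  have h := Summable.tsum_le_tsum (fun j => combF_le ν j y) (summable_combF ν y) summable_aux
  have h2 : ∑' j : ℕ, (1/2:ℝ)^j * (1/4) = 1/2 := by
    rw [tsum_mul_right, tsum_geometric_of_lt_one (by norm_num) (by norm_num)]
    norm_num
  rw [h2] at h
  exact h

lemma combF_ge (ν : ℕ → ℕ) (j : ℕ) (y : ℝ) : combF ν j y ≤ qF ν y :=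
  Summable.le_tsum (summable_combF ν y) j (fun j' _ => combF_nonneg ν j' y)

lemma half_pow_mul_two_pow (m : ℕ) : ((1:ℝ)/2)^m * 2^m = 1 := by
  rw [one_div, inv_pow, inv_mul_cancel₀ (by positivity)]

/-- the grid points of interval `j` are zeros of `qF ν`. -/
lemma qF_grid (ν : ℕ → ℕ) (hν : ∀ i, 1 ≤ ν i) (j k : ℕ) (hk : k < ν j) :
    qF ν (1 - (1/2)^j + k * (1/2)^(j+1) / (ν j)) = 0 := by
  set y : ℝ := 1 - (1/2)^j + k * (1/2)^(j+1) / (ν j) with hy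
  have hνj : (0:ℝ) < ν j := by exact_mod_cast hν j
  have hall : ∀ j' : ℕ, combF ν j' y = 0 := by
    intro j'
    unfold combF
    rw [Finset.sum_eq_zero, mul_zero]
    intro m hm
    rcases lt_trichotomy j' j with hlt | heq | hgt
    · -- j' < j : y is at or beyond the right end of interval j'
      apply Bmp_zero_of_one_le
      have hy1 : 1 - (1/2:ℝ)^(j'+1) ≤ y := by
        have h1 : (1/2:ℝ)^j ≤ (1/2)^(j'+1) :=
          pow_le_pow_of_le_one (by norm_num) (by norm_num) hlt
        have h2 : (0:ℝ) ≤ k * (1/2)^(j+1) / (ν j) := by positivity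
        rw [hy]; linarith
      have hm' : (m:ℝ) ≤ ν j' - 1 := by
        have : m + 1 ≤ ν j' := Finset.mem_range.mp hm
        have := (Nat.cast_le (α := ℝ)).mpr this
        push_cast at this
        linarith
      have key : (ν j' : ℝ) ≤ (y - (1 - (1/2)^j')) * (ν j' * 2^(j'+1)) := by
        have hl : ((1/2:ℝ))^(j'+1) ≤ y - (1 - (1/2)^j') := by
          have : (1/2:ℝ)^j' = (1/2)^(j'+1) + (1/2)^(j'+1) := by ring
          linarith
        have hpos : (0:ℝ) < (ν j' : ℝ) * 2^(j'+1) := by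
          have : (0:ℝ) < ν j' := by exact_mod_cast hν j'
          positivity
        calc (ν j' : ℝ) = (1/2)^(j'+1) * (ν j' * 2^(j'+1)) := by
              rw [show ((1:ℝ)/2)^(j'+1) * ((ν j':ℝ) * 2^(j'+1)) =
                ((1:ℝ)/2)^(j'+1) * 2^(j'+1) * ν j' by ring, half_pow_mul_two_pow, one_mul]
          _ ≤ (y - (1 - (1/2)^j')) * (ν j' * 2^(j'+1)) :=
              mul_le_mul_of_nonneg_right hl (le_of_lt hpos)
      linarith
    · -- j' = j : grid points
      subst heq
      have harg : (y - (1 - (1/2)^j')) * (ν j' * 2^(j'+1)) = (k:ℝ) := by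
        rw [hy]
        have h1 : ((1:ℝ) - (1/2)^j' + ↑k * (1/2)^(j'+1) / ↑(ν j') - (1 - (1/2)^j'))
            = ↑k * (1/2)^(j'+1) / ↑(ν j') := by ring
        rw [h1]
        rw [div_mul_eq_mul_div]
        rw [show (↑k * (1/2:ℝ)^(j'+1) * (↑(ν j') * 2^(j'+1))) =
          ↑k * ((1/2:ℝ)^(j'+1) * 2^(j'+1)) * ↑(ν j') by ring, half_pow_mul_two_pow]
        rw [mul_one, mul_div_assoc, div_self (ne_of_gt hνj), mul_one]
      rw [harg]
      exact Bmp_natdiff k m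
    · -- j < j' : y is left of interval j'
      apply Bmp_zero_of_nonpos
      have hy2 : y ≤ 1 - (1/2:ℝ)^j' := by
        have h1 : (1/2:ℝ)^j' ≤ (1/2)^(j+1) :=
          pow_le_pow_of_le_one (by norm_num) (by norm_num) hgt
        have h2 : (k:ℝ) * (1/2)^(j+1) / ↑(ν j) ≤ (1/2)^(j+1) := by
          rw [div_le_iff₀ hνj]
          have hk' : (k:ℝ) ≤ ν j := by
            have := le_of_lt hk
            exact_mod_cast this
          have : (k:ℝ) * (1/2)^(j+1) ≤ ↑(ν j) * (1/2)^(j+1) :=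
            mul_le_mul_of_nonneg_right hk' (by positivity)
          linarith [this]
        have h3 : (1/2:ℝ)^j = (1/2)^(j+1) + (1/2)^(j+1) := by ring
        rw [hy]; linarith
      have hpos : (0:ℝ) < (ν j' : ℝ) * 2^(j'+1) := by
        have : (0:ℝ) < ν j' := by exact_mod_cast hν j'
        positivity
      have : (y - (1 - (1/2)^j')) * (ν j' * 2^(j'+1)) ≤ 0 :=
        mul_nonpos_of_nonpos_of_nonneg (by linarith) (le_of_lt hpos)
      have hm0 : (0:ℝ) ≤ m := Nat.cast_nonneg m
      linarith
  unfold qF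
  rw [show (fun j' => combF ν j' y) = (fun _ => (0:ℝ)) from funext hall, tsum_zero]

lemma qF_integral_lb (ν : ℕ → ℕ) (hν : ∀ i, 1 ≤ ν i) (j : ℕ) :
    (1/2:ℝ)^j * ((1/2)^(j+1) / 6) ≤
      ∫ y in (1 - (1/2:ℝ)^j)..(1 - (1/2:ℝ)^(j+1)), qF ν y := by
  have hν0 : (0:ℝ) < ν j := by exact_mod_cast hν j
  set s : ℝ := 1 - (1/2)^j with hs
  set t : ℝ := 1 - (1/2)^(j+1) with ht
  set a : ℝ := (ν j : ℝ) * 2^(j+1) with ha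
  have ha0 : 0 < a := by rw [ha]; positivity
  have hts : t - s = (1/2:ℝ)^(j+1) := by rw [hs, ht]; ring
  have hst : s ≤ t := by
    rw [hs, ht]
    have : (1/2:ℝ)^(j+1) ≤ (1/2)^j :=
      pow_le_pow_of_le_one (by norm_num) (by norm_num) (Nat.le_succ j)
    linarith
  have hna : (ν j : ℝ) / a = (1/2:ℝ)^(j+1) := by
    rw [div_eq_iff (ne_of_gt ha0), ha, eq_comm,
      show ((1:ℝ)/2)^(j+1) * ((ν j : ℝ) * 2^(j+1)) =
        ((1:ℝ)/2)^(j+1) * 2^(j+1) * (ν j : ℝ) from by ring,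
      half_pow_mul_two_pow, one_mul]
  -- step C : each tooth contributes at least a⁻¹ * (1/6)
  have hC : ∀ k ∈ Finset.range (ν j),
      a⁻¹ * (1/6) ≤ ∫ y in s..t, Bmp ((y - s) * a - k) := by
    intro k hk
    have hk' : (k:ℝ) + 1 ≤ ν j := by exact_mod_cast Finset.mem_range.mp hk
    have hk0 : (0:ℝ) ≤ k := Nat.cast_nonneg k
    have hfun : (fun y => Bmp ((y - s) * a - (k:ℝ))) =
        fun y => Bmp (a * y + (-(s*a) - k)) := by
      funext y; congr 1; ring
    have hsub : ∫ y in (s + k/a)..(s + ((k:ℝ)+1)/a), Bmp ((y - s) * a - (k:ℝ))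
        = a⁻¹ * (1/6) := by
      rw [hfun, intervalIntegral.integral_comp_mul_add Bmp (ne_of_gt ha0) (-(s*a) - k)]
      have e1 : a * (s + (k:ℝ)/a) + (-(s*a) - k) = 0 := by
        field_simp
        ring
      have e2 : a * (s + ((k:ℝ)+1)/a) + (-(s*a) - k) = 1 := by
        field_simp
        ring
      rw [e1, e2, Bmp_integral, smul_eq_mul]
    have hp : s ≤ s + (k:ℝ)/a := by
      have : (0:ℝ) ≤ (k:ℝ)/a := by positivity
      linarith
    have hpq : s + (k:ℝ)/a ≤ s + ((k:ℝ)+1)/a := by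
      have : (k:ℝ)/a ≤ ((k:ℝ)+1)/a := by gcongr; linarith
      linarith
    have hqt : s + ((k:ℝ)+1)/a ≤ t := by
      have h1 : ((k:ℝ)+1)/a ≤ (ν j : ℝ)/a := by gcongr
      rw [hna] at h1
      linarith
    have hmono : ∫ y in (s + (k:ℝ)/a)..(s + ((k:ℝ)+1)/a), Bmp ((y - s) * a - (k:ℝ))
        ≤ ∫ y in s..t, Bmp ((y - s) * a - (k:ℝ)) :=
      intervalIntegral.integral_mono_interval hp hpq hqt
        (ae_of_all _ fun x => Bmp_nonneg _)
        ((Bmp_cont.comp (by fun_prop)).intervalIntegrable _ _)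
    rw [← hsub]
    exact hmono
  -- step B : the integral of combF ν j over [s,t]
  have hB : (1/2:ℝ)^j * ((1/2)^(j+1) / 6) ≤ ∫ y in s..t, combF ν j y := by
    have hint : ∫ y in s..t, combF ν j y =
        (1/2:ℝ)^j * ∑ k ∈ Finset.range (ν j), ∫ y in s..t, Bmp ((y - s) * a - k) := by
      have hInt : ∀ k ∈ Finset.range (ν j),
          IntervalIntegrable (fun y => Bmp ((y - s) * a - (k:ℝ))) volume s t :=
        fun k _ =>
          ((Bmp_cont.comp (by fun_prop) : Continuous fun y : ℝ =>
            Bmp ((y - s) * a - (k:ℝ)))).intervalIntegrable _ _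
      simp only [combF, ← hs, ← ha]
      rw [intervalIntegral.integral_const_mul,
        intervalIntegral.integral_finset_sum hInt]
    rw [hint]
    apply mul_le_mul_of_nonneg_left _ (by positivity)
    calc (1/2:ℝ)^(j+1) / 6 = (ν j : ℝ) * (a⁻¹ * (1/6)) := by
          rw [← hna]; ring
      _ = ∑ _k ∈ Finset.range (ν j), a⁻¹ * (1/6) := by
          rw [Finset.sum_const, Finset.card_range, nsmul_eq_mul]
      _ ≤ ∑ k ∈ Finset.range (ν j), ∫ y in s..t, Bmp ((y - s) * a - k) :=
          Finset.sum_le_sum hC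
  -- step A : combF ≤ qF
  refine hB.trans (intervalIntegral.integral_mono_on hst
    ((combF_cont ν j).intervalIntegrable _ _)
    ((qF_cont ν).intervalIntegrable _ _) (fun x _ => combF_ge ν j x))

/-- Scalar form of Theorem 4.3: the operator-norm convergence of the Trotter
product formula for `{D₀, Q}` can be arbitrarily slow. For every positive
sequence `δ_n → 0` there is a continuous nonnegative `q : [0,1] → ℝ` such that
`limsup_n (1/δ_n)·sup_{0 ≤ s < t ≤ 1} |∫_s^t q − S_n(t,s;q)| = ∞`, expressed
as: for every `M` the quantity exceeds `M` frequently. -/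
theorem darboux_uniform_arbitrarily_slow (δ : ℕ → ℝ) (hδpos : ∀ n, 0 < δ n)
    (hδ : Filter.Tendsto δ Filter.atTop (nhds 0)) :
    ∃ q : ℝ → ℝ, ContinuousOn q (Set.Icc (0:ℝ) 1) ∧
      (∀ y ∈ Set.Icc (0:ℝ) 1, 0 ≤ q y) ∧
      ∀ M : ℝ, ∃ᶠ n in Filter.atTop,
        M < (1 / δ n) *
          sSup {r : ℝ | ∃ s t : ℝ, 0 ≤ s ∧ s < t ∧ t ≤ 1 ∧
            r = |(∫ y in s..t, q y) -
                  (t - s) / n * ∑ k ∈ Finset.range n, q (s + k * (t - s) / n)|} := by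
  have hex : ∀ j : ℕ, ∃ N : ℕ, j + 1 ≤ N ∧ δ N < (1/8)^j / 12 := by
    intro j
    have hpos : (0:ℝ) < (1/8)^j / 12 := by positivity
    have hev : ∀ᶠ n in Filter.atTop, δ n < (1/8)^j / 12 :=
      hδ.eventually (gt_mem_nhds hpos)
    rcases Filter.eventually_atTop.mp hev with ⟨N₀, hN₀⟩
    exact ⟨max N₀ (j+1), le_max_right _ _, hN₀ _ (le_max_left _ _)⟩
  choose ν hν1 hν2 using hex
  have hν : ∀ i, 1 ≤ ν i := fun i => le_trans (Nat.succ_le_succ (Nat.zero_le i)) (hν1 i)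
  refine ⟨qF ν, (qF_cont ν).continuousOn, fun y _ => qF_nonneg ν y, ?_⟩
  intro M
  rw [Filter.frequently_atTop]
  intro N₁
  obtain ⟨j₀, hj₀⟩ := pow_unbounded_of_one_lt M (by norm_num : (1:ℝ) < 2)
  set j := max j₀ N₁ with hj
  refine ⟨ν j, le_trans (le_trans (le_max_right _ _) (Nat.le_succ _)) (hν1 j), ?_⟩
  have hνj0 : (0:ℝ) < (ν j : ℝ) := by exact_mod_cast hν j
  set S : Set ℝ := {r : ℝ | ∃ s t : ℝ, 0 ≤ s ∧ s < t ∧ t ≤ 1 ∧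
      r = |(∫ y in s..t, qF ν y) -
            (t - s) / (ν j) * ∑ k ∈ Finset.range (ν j),
              qF ν (s + k * (t - s) / (ν j))|} with hS
  have hbdd : BddAbove S := by
    refine ⟨1, ?_⟩
    rintro r ⟨s, t, hs0, hst, ht1, rfl⟩
    have h1 : |∫ y in s..t, qF ν y| ≤ 1/2 * |t - s| := by
      rw [← Real.norm_eq_abs]
      apply intervalIntegral.norm_integral_le_of_norm_le_const
      intro x _
      rw [Real.norm_eq_abs, abs_of_nonneg (qF_nonneg ν x)]
      exact qF_le_half ν x
    have hts1 : |t - s| ≤ 1 := by rw [abs_of_nonneg (by linarith)]; linarith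
    have h2 : |(t - s) / (ν j) * ∑ k ∈ Finset.range (ν j),
        qF ν (s + k * (t - s) / (ν j))| ≤ 1/2 := by
      have hts0 : 0 ≤ (t - s) / (ν j : ℝ) :=
        div_nonneg (by linarith) (le_of_lt hνj0)
      rw [abs_of_nonneg (mul_nonneg hts0 (Finset.sum_nonneg fun k _ => qF_nonneg ν _))]
      have hsum : ∑ k ∈ Finset.range (ν j), qF ν (s + k * (t - s) / (ν j))
          ≤ (ν j : ℝ) * (1/2) := by
        calc ∑ k ∈ Finset.range (ν j), qF ν (s + k * (t - s) / (ν j))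
            ≤ ∑ _k ∈ Finset.range (ν j), (1/2:ℝ) :=
              Finset.sum_le_sum fun k _ => qF_le_half ν _
          _ = (ν j : ℝ) * (1/2) := by
              rw [Finset.sum_const, Finset.card_range, nsmul_eq_mul]
      calc (t - s) / (ν j) * ∑ k ∈ Finset.range (ν j), qF ν (s + k * (t - s) / (ν j))
          ≤ (t - s) / (ν j) * ((ν j : ℝ) * (1/2)) :=
            mul_le_mul_of_nonneg_left hsum hts0
        _ = (t - s) * (1/2) := by
            field_simp
        _ ≤ 1/2 := by nlinarith
    calc |(∫ y in s..t, qF ν y) -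
          (t - s) / (ν j) * ∑ k ∈ Finset.range (ν j), qF ν (s + k * (t - s) / (ν j))|
        ≤ |∫ y in s..t, qF ν y| +
          |(t - s) / (ν j) * ∑ k ∈ Finset.range (ν j), qF ν (s + k * (t - s) / (ν j))| :=
          abs_sub _ _
      _ ≤ 1/2 * |t - s| + 1/2 := by nlinarith [abs_nonneg (t - s), h1, h2, hts1]
      _ ≤ 1 := by nlinarith [hts1]
  -- the element of S coming from interval j
  set sj : ℝ := 1 - (1/2)^j with hsj
  set tj : ℝ := 1 - (1/2)^(j+1) with htj
  have hts : tj - sj = (1/2:ℝ)^(j+1) := by rw [hsj, htj]; ring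
  have hsj0 : 0 ≤ sj := by
    rw [hsj]
    have : (1/2:ℝ)^j ≤ 1 := pow_le_one₀ (by norm_num) (by norm_num)
    linarith
  have hsjtj : sj < tj := by
    rw [hsj, htj]
    have h1 : (1/2:ℝ)^(j+1) < (1/2)^j := by
      have hp : (0:ℝ) < (1/2)^j := by positivity
      calc (1/2:ℝ)^(j+1) = (1/2)^j * (1/2) := by ring
        _ < (1/2)^j := by linarith
    linarith
  have htj1 : tj ≤ 1 := by
    rw [htj]
    have : (0:ℝ) < (1/2:ℝ)^(j+1) := by positivity
    linarith
  have hsum0 : ∑ k ∈ Finset.range (ν j), qF ν (sj + k * (tj - sj) / (ν j)) = 0 := by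
    apply Finset.sum_eq_zero
    intro k hk
    rw [hts, hsj]
    rw [show (1:ℝ) - (1/2)^j + ↑k * (1/2)^(j+1) / ↑(ν j)
      = 1 - (1/2)^j + ↑k * (1/2)^(j+1) / ↑(ν j) from rfl]
    exact qF_grid ν hν j k (Finset.mem_range.mp hk)
  have hint_nonneg : 0 ≤ ∫ y in sj..tj, qF ν y :=
    intervalIntegral.integral_nonneg (le_of_lt hsjtj) (fun x _ => qF_nonneg ν x)
  have hmem : (∫ y in sj..tj, qF ν y) ∈ S := by
    refine ⟨sj, tj, hsj0, hsjtj, htj1, ?_⟩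
    rw [hsum0, mul_zero, sub_zero, abs_of_nonneg hint_nonneg]
  have hSsup : (1/4:ℝ)^j / 12 ≤ sSup S := by
    refine le_trans ?_ (le_csSup hbdd hmem)
    have h4 : (1/2:ℝ)^j * ((1/2)^(j+1)/6) = (1/4)^j/12 := by
      rw [show ((1:ℝ)/4) = (1/2)*(1/2) from by norm_num, mul_pow]
      ring
    rw [← h4]
    exact qF_integral_lb ν hν j
  have hδn : δ (ν j) < (1/8)^j / 12 := hν2 j
  have hδnpos : 0 < δ (ν j) := hδpos (ν j)
  have h12 : 12 * 8^j ≤ 1 / δ (ν j) := by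
    rw [le_div_iff₀ hδnpos]
    have h8 : (1/8:ℝ)^j / 12 = 1 / (12 * 8^j) := by
      rw [div_pow, one_pow]
      ring
    rw [h8] at hδn
    have hp : (0:ℝ) < 12 * 8^j := by positivity
    calc 12 * (8:ℝ)^j * δ (ν j) ≤ 12 * 8^j * (1 / (12 * 8^j)) := by
          apply mul_le_mul_of_nonneg_left (le_of_lt hδn) (le_of_lt hp)
      _ = 1 := by field_simp
  calc M < (2:ℝ)^j₀ := hj₀
    _ ≤ (2:ℝ)^j := pow_le_pow_right₀ (by norm_num) (le_max_left _ _)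
    _ = (12 * 8^j) * ((1/4)^j/12) := by
        rw [show (2:ℝ)^j = (8 * (1/4):ℝ)^j from by norm_num, mul_pow]
        ring
    _ ≤ (1 / δ (ν j)) * ((1/4)^j/12) :=
        mul_le_mul_of_nonneg_right h12 (by positivity)
    _ ≤ (1 / δ (ν j)) * sSup S :=
        mul_le_mul_of_nonneg_left hSsup (by positivity)
end

section
/- For every sequence of positive reals (δ_n)_{n∈ℕ} with δ_n → 0, there exists a continuous nonnegative function q : [0,1] → ℝ such that limsup_{n→∞} (1/δ_n) · sup over all pairs (t,s) with 0 ≤ s < t ≤ 1 of |e^{−∫_s^t q(y) dy} − e^{−S_n(t,s;q)}| = ∞. -/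
open MeasureTheory Real
set_option maxHeartbeats 2000000

private lemma aux_sum_cos {N m : ℕ} (hm : 0 < m) (hmN : m < N) :
    ∑ j ∈ Finset.range N, Real.cos (2 * π * m * j / N) = 0 := by
  have hN0 : 0 < N := hm.trans hmN
  have hNR : (0:ℝ) < N := by exact_mod_cast hN0
  set c : ℝ := 2 * π * m / N with hc
  set z : ℂ := Complex.exp ((c:ℂ) * Complex.I) with hz
  have hterm : ∀ j : ℕ, Real.cos (2 * π * m * j / N) = (z ^ j).re := by
    intro j
    rw [hz, ← Complex.exp_nat_mul]
    have : (j:ℂ) * ((c:ℂ) * Complex.I) = ((c * j : ℝ) : ℂ) * Complex.I := by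
      push_cast; ring
    rw [this, Complex.exp_ofReal_mul_I_re]
    congr 1
    rw [hc]; ring
  have hzN : z ^ N = 1 := by
    rw [hz, ← Complex.exp_nat_mul]
    have h1 : (N:ℂ) * ((c:ℂ) * Complex.I) = ((m:ℤ):ℂ) * (2 * (π:ℂ) * Complex.I) := by
      have hNc : (N:ℝ) * c = m * (2 * π) := by rw [hc]; field_simp
      have : (N:ℂ) * (c:ℂ) = ((m:ℝ) * (2*π) : ℝ) := by
        push_cast
        have hNcC := congrArg (fun x : ℝ => (x:ℂ)) hNc
        push_cast at hNcC
        linear_combination hNcC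
      push_cast at this ⊢
      rw [show (N:ℂ) * ((c:ℂ) * Complex.I) = ((N:ℂ) * (c:ℂ)) * Complex.I by ring, this]
      ring
    rw [h1, Complex.exp_int_mul_two_pi_mul_I]
  have hz1 : z ≠ 1 := by
    intro h
    rw [hz, Complex.exp_eq_one_iff] at h
    obtain ⟨n, hn⟩ := h
    have him := congrArg Complex.im hn
    simp [Complex.ofReal_im, Complex.mul_im, Complex.I_im, Complex.I_re] at him
    -- him : c = n * (2 * π)  (roughly)
    have hc0 : 0 < c := by rw [hc]; positivity
    have hc2 : c < 2 * π := by
      rw [hc]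
      rw [div_lt_iff₀ hNR]
      have : (m:ℝ) < N := by exact_mod_cast hmN
      nlinarith [pi_pos]
    have hn0 : 0 < (n:ℝ) := by nlinarith [pi_pos]
    have hn1 : (n:ℝ) < 1 := by nlinarith [pi_pos]
    have : (0:ℤ) < n := by exact_mod_cast hn0
    have : (n:ℤ) < 1 := by exact_mod_cast hn1
    omega
  have hsum : ∑ j ∈ Finset.range N, z ^ j = 0 := by
    rw [geom_sum_eq hz1, hzN]
    simp
  calc ∑ j ∈ Finset.range N, Real.cos (2 * π * m * j / N)
      = ∑ j ∈ Finset.range N, (z ^ j).re := by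
        exact Finset.sum_congr rfl fun j _ => hterm j
    _ = (∑ j ∈ Finset.range N, z ^ j).re := by rw [Complex.re_sum]
    _ = 0 := by rw [hsum]; rfl

private lemma aux_integral (m : ℕ) (hm : 0 < m) :
    ∫ y in (0:ℝ)..1, (1 - Real.cos (2 * π * m * y)) = 1 := by
  have hc : (2 * π * (m:ℝ)) ≠ 0 := by positivity
  have h1 : ∫ y in (0:ℝ)..1, Real.cos (2 * π * m * y) = 0 := by
    have := intervalIntegral.integral_comp_mul_left (a := (0:ℝ)) (b := 1)
      (fun x => Real.cos x) hc
    simp only [mul_zero, mul_one] at this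
    rw [this, integral_cos, Real.sin_zero, sub_zero]
    have h2 : (2 * π * (m:ℝ)) = ((2 * m : ℕ) : ℝ) * π := by push_cast; ring
    rw [h2, Real.sin_nat_mul_pi, smul_zero]
  have hcont : Continuous fun y : ℝ => Real.cos (2 * π * m * y) := by
    fun_prop
  rw [intervalIntegral.integral_sub intervalIntegrable_const
      (hcont.intervalIntegrable 0 1), h1, sub_zero, intervalIntegral.integral_const]
  simp

private lemma aux_subseq (T : ℕ → ℕ) :
    ∃ ν : ℕ → ℕ, (∀ k, 0 < ν k) ∧ (∀ k, T k ≤ ν k) ∧ StrictMono ν ∧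
      (∀ m k, m ≤ k → ν m ∣ ν k) := by
  let ν : ℕ → ℕ := fun k => Nat.rec (T 0 + 1) (fun k ih => ih * (T (k+1) + 2)) k
  have hν0 : ∀ k, 0 < ν k := by
    intro k; induction k with
    | zero => simp [ν]
    | succ k ih => exact Nat.mul_pos ih (by omega)
  have hνT : ∀ k, T k ≤ ν k := by
    intro k; cases k with
    | zero => simp [ν]
    | succ k =>
        have h1 : ν (k+1) = ν k * (T (k+1) + 2) := rfl
        have := hν0 k
        calc T (k+1) ≤ 1 * (T (k+1) + 2) := by omega
          _ ≤ ν k * (T (k+1) + 2) := Nat.mul_le_mul_right _ this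
          _ = ν (k+1) := h1.symm
  have hνmono : StrictMono ν := by
    apply strictMono_nat_of_lt_succ
    intro k
    have h1 : ν (k+1) = ν k * (T (k+1) + 2) := rfl
    have := hν0 k
    calc ν k < ν k * 2 := by omega
      _ ≤ ν k * (T (k+1) + 2) := Nat.mul_le_mul_left _ (by omega)
      _ = ν (k+1) := h1.symm
  have hνdvd : ∀ m k, m ≤ k → ν m ∣ ν k := by
    intro m k hmk
    induction k with
    | zero => rw [Nat.le_zero.mp hmk]
    | succ k ih =>
        rcases Nat.lt_or_ge m (k+1) with h | h
        · exact (ih (by omega)).trans ⟨T (k+1) + 2, rfl⟩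
        · rw [show m = k+1 by omega]
  exact ⟨ν, hν0, hνT, hνmono, hνdvd⟩

/-- For every positive sequence `δ_n → 0` there is a continuous nonnegative
`q : [0,1] → ℝ` such that
`limsup_n (1/δ_n)·sup_{0 ≤ s < t ≤ 1} |e^{−∫_s^t q} − e^{−S_n(t,s;q)}| = ∞`,
expressed as: for every `M` the quantity exceeds `M` frequently. -/
theorem trotter_arbitrarily_slow (δ : ℕ → ℝ) (hδpos : ∀ n, 0 < δ n)
    (hδ : Filter.Tendsto δ Filter.atTop (nhds 0)) :
    ∃ q : ℝ → ℝ, ContinuousOn q (Set.Icc (0:ℝ) 1) ∧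
      (∀ y ∈ Set.Icc (0:ℝ) 1, 0 ≤ q y) ∧
      ∀ M : ℝ, ∃ᶠ n in Filter.atTop,
        M < (1 / δ n) *
          sSup {r : ℝ | ∃ s t : ℝ, 0 ≤ s ∧ s < t ∧ t ≤ 1 ∧
            r = |Real.exp (-(∫ y in s..t, q y)) -
                  Real.exp (-((t - s) / n *
                    ∑ k ∈ Finset.range n, q (s + k * (t - s) / n)))|} := by
  -- sequence a
  set a : ℕ → ℝ := fun m => (2:ℝ)⁻¹ ^ (m+1) with ha
  have ha_pos : ∀ m, 0 < a m := fun m => by positivity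
  have ha_summ : Summable a := by
    have : Summable (fun m : ℕ => (2:ℝ)⁻¹ ^ m) :=
      summable_geometric_of_lt_one (by norm_num) (by norm_num)
    exact (summable_nat_add_iff 1).2 this |>.congr (fun m => by rw [ha])
  have ha_tsum : ∑' m, a m = 1 := by
    have h1 : ∑' m : ℕ, (2:ℝ)⁻¹ ^ m = 2 := by
      rw [tsum_geometric_of_lt_one (by norm_num) (by norm_num)]; norm_num
    have h2 : ∀ m : ℕ, a m = (2:ℝ)⁻¹ ^ m * 2⁻¹ := fun m => by simp only [ha]; rw [pow_succ]
    rw [tsum_congr h2, tsum_mul_right, h1]; norm_num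
  -- thresholds
  have hT : ∀ k : ℕ, ∃ T : ℕ, ∀ n ≥ T, δ n < a k / (k+1) := by
    intro k
    have hpos : (0:ℝ) < a k / (k+1) := by positivity
    exact Filter.eventually_atTop.mp (hδ.eventually_lt_const hpos)
  choose T hTspec using hT
  obtain ⟨ν, hν0, hνT, hνmono, hνdvd⟩ := aux_subseq T
  have hδν : ∀ k, δ (ν k) < a k / (k+1) := fun k => hTspec k _ (hνT k)
  -- the function
  set f : ℕ → ℝ → ℝ := fun m y => a m * (1 - Real.cos (2 * π * (Nat.cast (ν m) : ℝ) * y)) with hf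
  have hf_nonneg : ∀ m y, 0 ≤ f m y := by
    intro m y
    apply mul_nonneg (ha_pos m).le
    nlinarith [Real.cos_le_one (2 * π * (Nat.cast (ν m) : ℝ) * y)]
  have hf_le : ∀ m y, f m y ≤ 2 * a m := by
    intro m y
    simp only [hf]
    have := Real.neg_one_le_cos (2 * π * (Nat.cast (ν m) : ℝ) * y)
    nlinarith [ha_pos m]
  have hf_cont : ∀ m, Continuous (f m) := by intro m; simp only [hf]; fun_prop
  have hsumm2 : Summable (fun m => 2 * a m) := ha_summ.mul_left 2
  have hq_summ : ∀ y, Summable (fun m => f m y) := by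
    intro y
    exact Summable.of_nonneg_of_le (fun m => hf_nonneg m y) (fun m => hf_le m y) hsumm2
  set q : ℝ → ℝ := fun y => ∑' m, f m y with hq
  have hq_cont : Continuous q := by
    apply continuous_tsum hf_cont hsumm2
    intro m y
    rw [Real.norm_eq_abs, abs_of_nonneg (hf_nonneg m y)]
    exact hf_le m y
  have hq_nonneg : ∀ y, 0 ≤ q y := fun y => tsum_nonneg (fun m => hf_nonneg m y)
  have hq_le : ∀ y, q y ≤ 2 := by
    intro y
    calc q y ≤ ∑' m, 2 * a m := Summable.tsum_le_tsum (fun m => hf_le m y) (hq_summ y) hsumm2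
      _ = 2 * ∑' m, a m := tsum_mul_left
      _ = 2 := by rw [ha_tsum]; norm_num
  refine ⟨q, hq_cont.continuousOn, fun y _ => hq_nonneg y, ?_⟩
  intro M
  rw [Filter.frequently_atTop]
  intro N0
  -- choose k large
  obtain ⟨k, hkN0, hkM⟩ : ∃ k : ℕ, N0 ≤ k ∧ M * Real.exp 2 < (k:ℝ) + 1 := by
    obtain ⟨k, hk⟩ := exists_nat_gt (max (N0:ℝ) (M * Real.exp 2))
    have h1 : (N0:ℝ) < k := (le_max_left _ _).trans_lt hk
    have h2 : M * Real.exp 2 < k := (le_max_right _ _).trans_lt hk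
    exact ⟨k, by exact_mod_cast h1.le, by linarith⟩
  refine ⟨ν k, hkN0.trans hνmono.le_apply, ?_⟩
  set N := ν k with hN
  have hN0' : 0 < N := hν0 k
  have hNR : (0:ℝ) < (Nat.cast N : ℝ) := by exact_mod_cast hN0'
  -- tail sample points vanish
  have htail0 : ∀ (mk j : ℕ), N ∣ mk →
      Real.cos (2 * π * (Nat.cast mk : ℝ) * ((j:ℝ)/(Nat.cast N : ℝ))) = 1 := by
    rintro mk j ⟨c, hc⟩
    have harg : 2 * π * (Nat.cast mk : ℝ) * ((j:ℝ)/(Nat.cast N : ℝ)) = ((c*j : ℕ):ℝ) * (2*π) := by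
      subst hc; push_cast; field_simp
    rw [harg, Real.cos_nat_mul_two_pi]
  -- value of q at sample points
  have hqpt : ∀ j : ℕ, q ((j:ℝ)/(Nat.cast N : ℝ)) = ∑ m ∈ Finset.range k, f m ((j:ℝ)/(Nat.cast N : ℝ)) := by
    intro j
    have hsplit := Summable.sum_add_tsum_nat_add (f := fun m => f m ((j:ℝ)/(Nat.cast N : ℝ))) k (hq_summ _)
    have hzero : ∑' m : ℕ, f (m+k) ((j:ℝ)/(Nat.cast N : ℝ)) = 0 := by
      have hz : ∀ m : ℕ, f (m+k) ((j:ℝ)/(Nat.cast N : ℝ)) = 0 := by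
        intro m
        simp only [hf]
        rw [htail0 (ν (m+k)) j (hνdvd k (m+k) (by omega))]
        ring
      simp [hz]
    calc q ((j:ℝ)/(Nat.cast N : ℝ))
        = ∑ m ∈ Finset.range k, f m ((j:ℝ)/(Nat.cast N : ℝ)) + ∑' m : ℕ, f (m+k) ((j:ℝ)/(Nat.cast N : ℝ)) :=
          hsplit.symm
      _ = ∑ m ∈ Finset.range k, f m ((j:ℝ)/(Nat.cast N : ℝ)) := by rw [hzero, add_zero]
  -- Riemann sum of head terms
  have hsumf : ∀ m, m < k → ∑ j ∈ Finset.range N, f m ((j:ℝ)/(Nat.cast N : ℝ)) = a m * (Nat.cast N : ℝ) := by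
    intro m hmk
    have hcos : ∑ j ∈ Finset.range N, Real.cos (2 * π * (Nat.cast (ν m) : ℝ) * ((j:ℝ)/(Nat.cast N : ℝ))) = 0 := by
      have := aux_sum_cos (N := N) (m := ν m) (hν0 m) (hνmono hmk)
      simpa only [mul_div_assoc] using this
    calc ∑ j ∈ Finset.range N, f m ((j:ℝ)/(Nat.cast N : ℝ))
        = ∑ j ∈ Finset.range N,
            (a m - a m * Real.cos (2 * π * (Nat.cast (ν m) : ℝ) * ((j:ℝ)/(Nat.cast N : ℝ)))) := by
          refine Finset.sum_congr rfl fun j _ => ?_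
          simp only [hf]; ring
      _ = (Nat.cast N : ℝ) * a m - a m * ∑ j ∈ Finset.range N,
            Real.cos (2 * π * (Nat.cast (ν m) : ℝ) * ((j:ℝ)/(Nat.cast N : ℝ))) := by
          rw [Finset.sum_sub_distrib, Finset.sum_const, Finset.card_range, ← Finset.mul_sum,
            nsmul_eq_mul]
      _ = a m * (Nat.cast N : ℝ) := by rw [hcos]; ring
  -- the Riemann sum equals S0
  set S0 : ℝ := ∑ m ∈ Finset.range k, a m with hS0
  have hS : (1:ℝ)/(Nat.cast N : ℝ) * ∑ j ∈ Finset.range N, q ((j:ℝ)/(Nat.cast N : ℝ)) = S0 := by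
    rw [Finset.sum_congr rfl (fun j _ => hqpt j), Finset.sum_comm,
      Finset.sum_congr rfl (fun m hm => hsumf m (Finset.mem_range.mp hm)),
      ← Finset.sum_mul, hS0]
    field_simp
  -- integrals
  have hint_f : ∀ m, ∫ y in (0:ℝ)..1, f m y = a m := by
    intro m
    simp only [hf]
    rw [intervalIntegral.integral_const_mul, aux_integral (ν m) (hν0 m), mul_one]
  set head : ℝ → ℝ := fun y => ∑ m ∈ Finset.range k, f m y with hhead
  have hhead_cont : Continuous head := by
    apply continuous_finset_sum
    exact fun m _ => hf_cont m
  have hint_head : ∫ y in (0:ℝ)..1, head y = S0 := by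
    rw [hhead, hS0]
    rw [intervalIntegral.integral_finset_sum
      (fun m _ => (hf_cont m).intervalIntegrable 0 1)]
    exact Finset.sum_congr rfl fun m _ => hint_f m
  set I : ℝ := ∫ y in (0:ℝ)..1, q y with hI
  have htail_cont : Continuous (fun y => q y - head y) := hq_cont.sub hhead_cont
  have htail_ge : ∀ y : ℝ, f k y ≤ q y - head y := by
    intro y
    have hsplit := Summable.sum_add_tsum_nat_add (f := fun m => f m y) k (hq_summ y)
    have hq_eq : q y = ∑' m : ℕ, f m y := rfl
    have hhead_eq : head y = ∑ m ∈ Finset.range k, f m y := rfl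
    have h1 : q y - head y = ∑' m : ℕ, f (m+k) y := by
      rw [hq_eq, hhead_eq]; linarith [hsplit]
    rw [h1]
    have hsummshift : Summable (fun m : ℕ => f (m+k) y) :=
      (summable_nat_add_iff k).2 (hq_summ y)
    have h2 : f (0+k) y ≤ ∑' m : ℕ, f (m+k) y :=
      Summable.le_tsum hsummshift 0 (fun j _ => hf_nonneg _ y)
    simpa using h2
  have hItail : a k ≤ I - S0 := by
    have h1 : ∫ y in (0:ℝ)..1, f k y ≤ ∫ y in (0:ℝ)..1, (q y - head y) := by
      apply intervalIntegral.integral_mono_on zero_le_one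
        ((hf_cont k).intervalIntegrable 0 1) (htail_cont.intervalIntegrable 0 1)
      exact fun y _ => htail_ge y
    rw [hint_f k] at h1
    rw [intervalIntegral.integral_sub (hq_cont.intervalIntegrable 0 1)
      (hhead_cont.intervalIntegrable 0 1), hint_head] at h1
    exact h1
  have hI2 : I ≤ 2 := by
    have h1 : ∫ y in (0:ℝ)..1, q y ≤ ∫ y in (0:ℝ)..1, (2:ℝ) := by
      apply intervalIntegral.integral_mono_on zero_le_one
        (hq_cont.intervalIntegrable 0 1) (intervalIntegrable_const)
      exact fun y _ => hq_le y
    simpa using h1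
  have hak : 0 < a k := ha_pos k
  have hIS0 : S0 ≤ I := by linarith
  -- the special set element
  have hexpr : (1-0)/(Nat.cast N : ℝ) *
      ∑ j ∈ Finset.range N, q (0 + (j:ℝ) * (1-0) / (Nat.cast N : ℝ)) = S0 := by
    have hp : ∀ j : ℕ, (0:ℝ) + (j:ℝ) * (1-0) / (Nat.cast N : ℝ) = (j:ℝ)/(Nat.cast N : ℝ) := by
      intro j; ring
    rw [Finset.sum_congr rfl (fun j _ => congrArg q (hp j))]
    rw [show (1-0)/(Nat.cast N : ℝ) = 1/(Nat.cast N : ℝ) by norm_num]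
    exact hS
  -- bound below the sup
  set SetR : Set ℝ := {r : ℝ | ∃ s t : ℝ, 0 ≤ s ∧ s < t ∧ t ≤ 1 ∧
    r = |Real.exp (-(∫ y in s..t, q y)) -
          Real.exp (-((t - s) / (Nat.cast N : ℝ) *
            ∑ j ∈ Finset.range N, q (s + (j:ℝ) * (t - s) / (Nat.cast N : ℝ))))|} with hSetR
  have hmem : |Real.exp (-I) - Real.exp (-S0)| ∈ SetR := by
    refine ⟨0, 1, le_refl 0, zero_lt_one, le_refl 1, ?_⟩
    rw [hexpr, hI]
  have hbdd : BddAbove SetR := by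
    refine ⟨1, fun r hr => ?_⟩
    obtain ⟨s, t, hs, hst, ht1, hr⟩ := hr
    have hx : 0 ≤ ∫ y in s..t, q y :=
      intervalIntegral.integral_nonneg hst.le (fun y _ => hq_nonneg y)
    have hy : 0 ≤ (t - s) / (Nat.cast N : ℝ) * ∑ j ∈ Finset.range N, q (s + (j:ℝ) * (t - s) / (Nat.cast N : ℝ)) := by
      apply mul_nonneg (div_nonneg (by linarith) (Nat.cast_nonneg N))
      exact Finset.sum_nonneg fun j _ => hq_nonneg _
    rw [hr, abs_le]
    constructor <;>
      nlinarith [Real.exp_pos (-(∫ y in s..t, q y)),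
        Real.exp_le_one_iff.2 (neg_nonpos.2 hx),
        Real.exp_pos (-((t - s) / (Nat.cast N : ℝ) * ∑ j ∈ Finset.range N, q (s + (j:ℝ) * (t - s) / (Nat.cast N : ℝ)))),
        Real.exp_le_one_iff.2 (neg_nonpos.2 hy)]
  have hsup : |Real.exp (-I) - Real.exp (-S0)| ≤ sSup SetR := le_csSup hbdd hmem
  -- lower bound on the element
  have hE : Real.exp (-2) * a k ≤ |Real.exp (-I) - Real.exp (-S0)| := by
    have hmono : Real.exp (-I) ≤ Real.exp (-S0) := Real.exp_le_exp.2 (by linarith)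
    rw [abs_sub_comm, abs_of_nonneg (by linarith)]
    have hfac : Real.exp (-S0) = Real.exp (-I) * Real.exp (I - S0) := by
      rw [← Real.exp_add]; ring_nf
    have h1 : I - S0 + 1 ≤ Real.exp (I - S0) := Real.add_one_le_exp _
    have h2 : Real.exp (-2) ≤ Real.exp (-I) := Real.exp_le_exp.2 (by linarith)
    have h3 : 0 < Real.exp (-I) := Real.exp_pos _
    nlinarith [Real.exp_pos (-2)]
  -- conclude
  have hδN := hδν k
  have hδNpos := hδpos N
  have hkpos : (0:ℝ) < (k:ℝ) + 1 := by positivity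
  have hdlt : δ N * ((k:ℝ)+1) < a k := (lt_div_iff₀ hkpos).mp hδN
  have hu : (0:ℝ) < 1 / δ N := by positivity
  have he2 : (0:ℝ) < Real.exp (-2) := Real.exp_pos _
  have hchain1 : ((k:ℝ)+1) * Real.exp (-2) < (1 / δ N) * (Real.exp (-2) * a k) := by
    rw [div_mul_eq_mul_div, one_mul, lt_div_iff₀ hδNpos]
    nlinarith
  have hchain2 : M < ((k:ℝ)+1) * Real.exp (-2) := by
    have h4 : Real.exp (-2) = (Real.exp 2)⁻¹ := Real.exp_neg 2
    have h5 : (0:ℝ) < Real.exp 2 := Real.exp_pos 2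
    rw [h4]
    have h6 := mul_lt_mul_of_pos_left hkM (inv_pos.mpr h5)
    have h7 : (Real.exp 2)⁻¹ * Real.exp 2 = 1 := inv_mul_cancel₀ h5.ne'
    nlinarith
  calc M < ((k:ℝ)+1) * Real.exp (-2) := hchain2
    _ < (1 / δ N) * (Real.exp (-2) * a k) := hchain1
    _ ≤ (1 / δ N) * sSup SetR := by
        apply mul_le_mul_of_nonneg_left _ hu.le
        exact le_trans hE hsup
end

section
/- There exists a bounded measurable function q : [0,1] → ℝ with 0 ≤ q(t) ≤ 1 for all t ∈ [0,1] such that limsup_{n→∞} of the supremum over all pairs (t,s) with 0 ≤ s < t ≤ 1 of |∫_s^t q(y) dy − S_{2^n}(t,s;q)| is at least 1/2; i.e. the Darboux–Riemann sums along the subsequence 2^n fail to converge to the integral uniformly over subintervals. -/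
open MeasureTheory

/-- There is a bounded measurable `q : [0,1] → ℝ` with `0 ≤ q ≤ 1` whose
Darboux–Riemann sums along the subsequence `2^n` fail to converge to the
integral uniformly over subintervals:
`limsup_n sup_{0 ≤ s < t ≤ 1} |∫_s^t q − S_{2^n}(t,s;q)| ≥ 1/2`. -/
theorem darboux_nonconvergence_exists :
    ∃ q : ℝ → ℝ, Measurable q ∧
      (∀ y ∈ Set.Icc (0:ℝ) 1, 0 ≤ q y ∧ q y ≤ 1) ∧
      (1:ℝ) / 2 ≤ Filter.limsup
        (fun n : ℕ => sSup {r : ℝ | ∃ s t : ℝ, 0 ≤ s ∧ s < t ∧ t ≤ 1 ∧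
          r = |(∫ y in s..t, q y) -
                (t - s) / 2 ^ n *
                  ∑ k ∈ Finset.range (2 ^ n), q (s + k * (t - s) / 2 ^ n)|})
        Filter.atTop := by
  classical
  set S : Set ℝ := Set.range ((↑) : ℚ → ℝ) with hS
  have hSc : S.Countable := Set.countable_range _
  have hSm : MeasurableSet S := hSc.measurableSet
  set q : ℝ → ℝ := S.indicator 1 with hq
  have hqm : Measurable q := (measurable_const.indicator hSm)
  have hq01 : ∀ x, 0 ≤ q x ∧ q x ≤ 1 := by
    intro x
    constructor <;> simp [hq, Set.indicator] <;> split <;> norm_num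
  have hS0 : volume S = 0 := hSc.measure_zero _
  have hq0 : q =ᵐ[volume] 0 := by
    have : ∀ᵐ x, x ∉ S := by
      rw [ae_iff]
      simpa using hS0
    filter_upwards [this] with x hx
    simp [hq, Set.indicator_of_notMem hx]
  have hint : ∀ s t : ℝ, (∫ y in s..t, q y) = 0 := by
    intro s t
    have : (∫ y in s..t, q y) = ∫ y in s..t, (0:ℝ) := by
      apply intervalIntegral.integral_congr_ae
      filter_upwards [hq0] with x hx _
      exact hx
    simp [this]
  refine ⟨q, hqm, fun y _ => hq01 y, ?_⟩
  have key : ∀ n : ℕ, sSup {r : ℝ | ∃ s t : ℝ, 0 ≤ s ∧ s < t ∧ t ≤ 1 ∧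
      r = |(∫ y in s..t, q y) -
            (t - s) / 2 ^ n *
              ∑ k ∈ Finset.range (2 ^ n), q (s + k * (t - s) / 2 ^ n)|} = 1 := by
    intro n
    have hqrat : ∀ r : ℚ, q (r : ℝ) = 1 := by
      intro r
      rw [hq]; exact Set.indicator_of_mem (Set.mem_range_self r) _
    have hmem : (1:ℝ) ∈ {r : ℝ | ∃ s t : ℝ, 0 ≤ s ∧ s < t ∧ t ≤ 1 ∧
        r = |(∫ y in s..t, q y) -
              (t - s) / 2 ^ n *
                ∑ k ∈ Finset.range (2 ^ n), q (s + k * (t - s) / 2 ^ n)|} := by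
      refine ⟨0, 1, le_refl 0, one_pos, le_refl 1, ?_⟩
      have hterm : ∀ k ∈ Finset.range (2 ^ n),
          q ((0:ℝ) + k * ((1:ℝ) - 0) / 2 ^ n) = 1 := by
        intro k _
        have : ((0:ℝ) + k * ((1:ℝ) - 0) / 2 ^ n) = ((k / 2 ^ n : ℚ) : ℝ) := by
          push_cast
          ring
        rw [this, hqrat]
      rw [hint, Finset.sum_congr rfl hterm]
      simp
    have hbdd : ∀ r ∈ {r : ℝ | ∃ s t : ℝ, 0 ≤ s ∧ s < t ∧ t ≤ 1 ∧
        r = |(∫ y in s..t, q y) -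
              (t - s) / 2 ^ n *
                ∑ k ∈ Finset.range (2 ^ n), q (s + k * (t - s) / 2 ^ n)|}, r ≤ 1 := by
      rintro r ⟨s, t, hs, hst, ht, rfl⟩
      rw [hint, zero_sub, abs_neg]
      have hsum : (∑ k ∈ Finset.range (2 ^ n), q (s + k * (t - s) / 2 ^ n)) ≤ 2 ^ n := by
        calc (∑ k ∈ Finset.range (2 ^ n), q (s + k * (t - s) / 2 ^ n))
            ≤ ∑ k ∈ Finset.range (2 ^ n), (1:ℝ) :=
              Finset.sum_le_sum (fun k _ => (hq01 _).2)
          _ = 2 ^ n := by simp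
      have hsumnn : 0 ≤ (∑ k ∈ Finset.range (2 ^ n), q (s + k * (t - s) / 2 ^ n)) :=
        Finset.sum_nonneg (fun k _ => (hq01 _).1)
      have hts : 0 ≤ t - s := by linarith
      rw [abs_of_nonneg (by positivity)]
      calc (t - s) / 2 ^ n * ∑ k ∈ Finset.range (2 ^ n), q (s + k * (t - s) / 2 ^ n)
          ≤ (t - s) / 2 ^ n * 2 ^ n := by
            apply mul_le_mul_of_nonneg_left hsum (by positivity)
        _ = t - s := by field_simp
        _ ≤ 1 := by linarith
    exact le_antisymm (csSup_le ⟨1, hmem⟩ hbdd) (le_csSup ⟨1, hbdd⟩ hmem)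
  have : (fun n : ℕ => sSup {r : ℝ | ∃ s t : ℝ, 0 ≤ s ∧ s < t ∧ t ≤ 1 ∧
      r = |(∫ y in s..t, q y) -
            (t - s) / 2 ^ n *
              ∑ k ∈ Finset.range (2 ^ n), q (s + k * (t - s) / 2 ^ n)|}) = fun _ => (1:ℝ) := by
    funext n; exact key n
  rw [this, Filter.limsup_const]
  norm_num
end
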